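/- arXiv:2309.00273 — 8 statements merged into one kernel-verified Lean document; each statement's English description precedes it below -/
import Mathlib

section
/- Let V ↪ X be a compact embedding of real Hilbert spaces and for each t in an interval I let A_t : V × V → ℝ and B_t : X × X → ℝ be bounded, coercive, symmetric bilinear forms (with bounds and coercivity constant δ uniform in t). Let λ_j(t) denote the j-th eigenvalue defined by the min-max principle λ_j(t) = min over j-dimensional subspaces L of V of max over v ∈ L \ {0} of A_t(v,v)/B_t(v,v). If A_{t+h} → A_t in the uniform (operator) sense on V × V and B_{t+h} → B_t uniformly on X × X as h → 0, then λ_j(t+h) → λ_j(t) as h → 0, for every j. -/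
/-- The `j`-th eigenvalue of the pair of forms `(A, B)` defined by the
Courant–Fischer min-max principle: the infimum over `j`-dimensional subspaces `L`
of the supremum over `v ∈ L \ {0}` of the Rayleigh quotient `A(v,v)/B(v,v)`. -/
noncomputable def minMaxEig {V : Type*} [AddCommGroup V] [Module ℝ V]
    (A B : V → V → ℝ) (j : ℕ) : ℝ :=
  sInf {μ : ℝ | ∃ L : Submodule ℝ V, Module.finrank ℝ L = j ∧
    μ = sSup ((fun v => A v v / B v v) '' {v : V | v ∈ L ∧ v ≠ 0})}

open Module Set

/-- nonzero vectors of a submodule -/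
def eigD {V : Type*} [AddCommGroup V] [Module ℝ V] (L : Submodule ℝ V) : Set V :=
  {v : V | v ∈ L ∧ v ≠ 0}

def eigSet {V : Type*} [AddCommGroup V] [Module ℝ V] (f : V → ℝ) (j : ℕ) : Set ℝ :=
  {μ : ℝ | ∃ L : Submodule ℝ V, Module.finrank ℝ L = j ∧ μ = sSup (f '' eigD L)}

lemma eigD_nonempty {V : Type*} [AddCommGroup V] [Module ℝ V] {L : Submodule ℝ V} {j : ℕ}
    (hj : j ≠ 0) (hL : Module.finrank ℝ L = j) : (eigD L).Nonempty := by
  have hbot : L ≠ ⊥ := by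
    rintro rfl
    rw [finrank_bot] at hL
    exact hj hL.symm
  obtain ⟨v, hv, h0⟩ := Submodule.exists_mem_ne_zero_of_ne_bot hbot
  exact ⟨v, hv, h0⟩

lemma eig_lb {V : Type*} [AddCommGroup V] [Module ℝ V] (f : V → ℝ) (j : ℕ) (hj : j ≠ 0) (m : ℝ)
    (hflb : ∀ v : V, v ≠ 0 → m ≤ f v)
    (hfub : ∀ L : Submodule ℝ V, Module.finrank ℝ L = j → BddAbove (f '' eigD L))
    (hP : ∃ L : Submodule ℝ V, Module.finrank ℝ L = j) :
    m ≤ sInf (eigSet f j) := by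
  obtain ⟨L₀, hL₀⟩ := hP
  refine le_csInf ⟨_, L₀, hL₀, rfl⟩ ?_
  rintro μ ⟨L, hL, rfl⟩
  obtain ⟨v, hv⟩ := eigD_nonempty hj hL
  exact le_trans (hflb v hv.2) (le_csSup (hfub L hL) ⟨v, hv, rfl⟩)

lemma eig_comp {V : Type*} [AddCommGroup V] [Module ℝ V] (f g : V → ℝ) (j : ℕ) (hj : j ≠ 0)
    (c m : ℝ) (hc : 0 < c)
    (hflb : ∀ v : V, v ≠ 0 → m ≤ f v)
    (hfub : ∀ L : Submodule ℝ V, Module.finrank ℝ L = j → BddAbove (f '' eigD L))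
    (hgub : ∀ L : Submodule ℝ V, Module.finrank ℝ L = j → BddAbove (g '' eigD L))
    (hfg : ∀ v : V, v ≠ 0 → f v ≤ c * g v)
    (hP : ∃ L : Submodule ℝ V, Module.finrank ℝ L = j) :
    sInf (eigSet f j) ≤ c * sInf (eigSet g j) := by
  have hEfbdd : BddBelow (eigSet f j) := by
    refine ⟨m, ?_⟩
    rintro μ ⟨L, hL, rfl⟩
    obtain ⟨v, hv⟩ := eigD_nonempty hj hL
    exact le_trans (hflb v hv.2) (le_csSup (hfub L hL) ⟨v, hv, rfl⟩)
  have key : sInf (eigSet f j) / c ≤ sInf (eigSet g j) := by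
    refine le_csInf ?_ ?_
    · obtain ⟨L, hL⟩ := hP; exact ⟨_, L, hL, rfl⟩
    · rintro μ ⟨L, hL, rfl⟩
      rw [div_le_iff₀ hc]
      have h1 : sInf (eigSet f j) ≤ sSup (f '' eigD L) := csInf_le hEfbdd ⟨L, hL, rfl⟩
      have h2 : sSup (f '' eigD L) ≤ c * sSup (g '' eigD L) := by
        refine csSup_le ((eigD_nonempty hj hL).image f) ?_
        rintro y ⟨v, hv, rfl⟩
        exact le_trans (hfg v hv.2)
          (mul_le_mul_of_nonneg_left (le_csSup (hgub L hL) ⟨v, hv, rfl⟩) hc.le)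
      linarith
  rw [div_le_iff₀ hc] at key
  linarith

lemma quot_bounds {a a' b b' θ : ℝ} (hθ0 : 0 ≤ θ) (hθ : θ ≤ 1/2)
    (ha : 0 < a) (hb : 0 < b)
    (ha' : |a' - a| ≤ θ * a) (hb' : |b' - b| ≤ θ * b) :
    (1 - 2*θ) * (a/b) ≤ a'/b' ∧ a'/b' ≤ (1 + 4*θ) * (a/b) := by
  rw [abs_le] at ha' hb'
  have hb'pos : 0 < b' := by nlinarith
  have hb2 : b' ≤ (1+θ)*b := by linarith [hb'.2]
  have hb3 : (1-θ)*b ≤ b' := by linarith [hb'.1]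
  have ha2 : (1-θ)*a ≤ a' := by linarith [ha'.1]
  have ha3 : a' ≤ (1+θ)*a := by linarith [ha'.2]
  constructor
  · rw [← mul_div_assoc, div_le_div_iff₀ hb hb'pos]
    have h1 : (1-2*θ)*a*b' ≤ (1-2*θ)*a*((1+θ)*b) :=
      mul_le_mul_of_nonneg_left hb2 (by nlinarith : (0:ℝ) ≤ (1-2*θ)*a)
    have h2 : ((1-θ)*a)*b ≤ a'*b := mul_le_mul_of_nonneg_right ha2 hb.le
    nlinarith [mul_nonneg (mul_nonneg (mul_nonneg hθ0 hθ0) ha.le) hb.le]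
  · rw [← mul_div_assoc, div_le_div_iff₀ hb'pos hb]
    have h1 : a'*b ≤ ((1+θ)*a)*b := mul_le_mul_of_nonneg_right ha3 hb.le
    have h2 : (1+4*θ)*a*((1-θ)*b) ≤ (1+4*θ)*a*b' :=
      mul_le_mul_of_nonneg_left hb3 (by nlinarith : (0:ℝ) ≤ (1+4*θ)*a)
    nlinarith [mul_nonneg (mul_nonneg (mul_nonneg hθ0 (by linarith : (0:ℝ) ≤ 1-2*θ)) ha.le) hb.le]

lemma diag_scale {X : Type*} [NormedAddCommGroup X] [NormedSpace ℝ X]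
    (F G : X →ₗ[ℝ] X →ₗ[ℝ] ℝ) (ε : ℝ) (hε : 0 ≤ ε)
    (h : ∀ u v : X, ‖u‖ ≤ 1 → ‖v‖ ≤ 1 → |F u v - G u v| ≤ ε) (x : X) :
    |F x x - G x x| ≤ ε * ‖x‖^2 := by
  rcases eq_or_ne x 0 with rfl | hx
  · simp
  · have hn : 0 < ‖x‖ := norm_pos_iff.mpr hx
    set u := ‖x‖⁻¹ • x with hu
    have hu1 : ‖u‖ = 1 := by
      rw [hu, norm_smul, norm_inv, norm_norm, inv_mul_cancel₀ hn.ne']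
    have hxu : x = ‖x‖ • u := by
      rw [hu, smul_smul, mul_inv_cancel₀ hn.ne', one_smul]
    have kF : F x x = ‖x‖^2 * F u u := by
      conv_lhs => rw [hxu]
      simp only [map_smul, LinearMap.smul_apply, smul_eq_mul]
      ring
    have kG : G x x = ‖x‖^2 * G u u := by
      conv_lhs => rw [hxu]
      simp only [map_smul, LinearMap.smul_apply, smul_eq_mul]
      ring
    rw [kF, kG, ← mul_sub, abs_mul, abs_of_nonneg (by positivity : (0:ℝ) ≤ ‖x‖^2), mul_comm]
    exact mul_le_mul_of_nonneg_right (h u u hu1.le hu1.le) (by positivity)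

lemma antilip {V X : Type*} [NormedAddCommGroup V] [NormedSpace ℝ V]
    [NormedAddCommGroup X] [NormedSpace ℝ X]
    (ι : V →L[ℝ] X) (hι : Function.Injective ι)
    (L : Submodule ℝ V) [FiniteDimensional ℝ L] :
    ∃ c : ℝ, 0 < c ∧ ∀ v ∈ L, c * ‖v‖ ≤ ‖ι v‖ := by
  set f : L →ₗ[ℝ] X := (ι : V →ₗ[ℝ] X).comp L.subtype with hf
  have hfinj : Function.Injective f := by
    intro a b hab
    simp only [hf, LinearMap.comp_apply, Submodule.subtype_apply,
      ContinuousLinearMap.coe_coe] at hab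
    exact Subtype.ext (hι hab)
  let e := LinearEquiv.ofInjective f hfinj
  let e' := e.toContinuousLinearEquiv
  obtain ⟨C, hCanti⟩ : ∃ C : NNReal, AntilipschitzWith C e' := ⟨_, e'.antilipschitz⟩
  have hC0 : (0:ℝ) ≤ C := C.coe_nonneg
  refine ⟨((C:ℝ) + 1)⁻¹, by positivity, ?_⟩
  intro v hv
  have key : ‖(⟨v, hv⟩ : L)‖ ≤ (C:ℝ) * ‖e' ⟨v, hv⟩‖ := by
    have := hCanti.le_mul_dist (⟨v, hv⟩ : L) 0
    simpa [dist_eq_norm, map_zero] using this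
  have hnorm : ‖e' (⟨v, hv⟩ : L)‖ = ‖ι v‖ := by
    have h1 : ((e' (⟨v, hv⟩ : L) : LinearMap.range f) : X) = ι v := by
      simp [e', e, f]
    rw [← h1]
    rfl
  have hnv : ‖(⟨v, hv⟩ : L)‖ = ‖v‖ := rfl
  rw [hnorm, hnv] at key
  rw [inv_mul_eq_div, div_le_iff₀ (by positivity)]
  nlinarith [norm_nonneg (ι v)]

lemma minMaxEig_eq {V : Type*} [AddCommGroup V] [Module ℝ V] (A B : V → V → ℝ) (j : ℕ) :
    minMaxEig A B j = sInf (eigSet (fun v => A v v / B v v) j) := rfl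

set_option maxHeartbeats 1000000 in
/-- continuity of the min-max eigenvalues under uniform convergence
of the bilinear forms. -/
theorem hadamard_stmt2
    {V : Type*} [NormedAddCommGroup V] [InnerProductSpace ℝ V] [CompleteSpace V]
    {X : Type*} [NormedAddCommGroup X] [InnerProductSpace ℝ X] [CompleteSpace X]
    (ι : V →L[ℝ] X) (hι : Function.Injective ι) (hcompact : IsCompactOperator ι)
    (K : ℝ) (hK : ∀ v : V, ‖ι v‖ ≤ K * ‖v‖)
    (A : ℝ → V →ₗ[ℝ] V →ₗ[ℝ] ℝ) (B : ℝ → X →ₗ[ℝ] X →ₗ[ℝ] ℝ)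
    (hAsymm : ∀ t, ∀ u v : V, A t u v = A t v u)
    (hBsymm : ∀ t, ∀ u v : X, B t u v = B t v u)
    (CA : ℝ) (hAbdd : ∀ t, ∀ u v : V, |A t u v| ≤ CA * ‖u‖ * ‖v‖)
    (CB : ℝ) (hBbdd : ∀ t, ∀ u v : X, |B t u v| ≤ CB * ‖u‖ * ‖v‖)
    (δ : ℝ) (hδ : 0 < δ)
    (hAcoer : ∀ t, ∀ v : V, δ * ‖v‖ ^ 2 ≤ A t v v)
    (hBcoer : ∀ t, ∀ v : X, δ * ‖v‖ ^ 2 ≤ B t v v)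
    (t : ℝ)
    (hAconv : ∀ ε > (0:ℝ), ∃ η > (0:ℝ), ∀ h : ℝ, |h| < η →
      ∀ u v : V, ‖u‖ ≤ 1 → ‖v‖ ≤ 1 → |A (t + h) u v - A t u v| ≤ ε)
    (hBconv : ∀ ε > (0:ℝ), ∃ η > (0:ℝ), ∀ h : ℝ, |h| < η →
      ∀ u v : X, ‖u‖ ≤ 1 → ‖v‖ ≤ 1 → |B (t + h) u v - B t u v| ≤ ε)
    (j : ℕ) (hj : 1 ≤ j) :
    Filter.Tendsto
      (fun h : ℝ => minMaxEig (fun u v : V => A (t + h) u v)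
        (fun u v : V => B (t + h) (ι u) (ι v)) j)
      (nhds 0)
      (nhds (minMaxEig (fun u v : V => A t u v)
        (fun u v : V => B t (ι u) (ι v)) j)) := by
  by_cases hP : ∃ L : Submodule ℝ V, Module.finrank ℝ L = j
  case neg =>
    have hE : ∀ f : V → ℝ, eigSet f j = (∅ : Set ℝ) := by
      intro f
      ext μ
      simp only [eigSet, Set.mem_setOf_eq, Set.mem_empty_iff_false, iff_false]
      rintro ⟨L, hL, -⟩
      exact hP ⟨L, hL⟩
    have h0 : ∀ s : ℝ, minMaxEig (fun u v : V => A s u v)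
        (fun u v : V => B s (ι u) (ι v)) j = 0 := by
      intro s
      rw [minMaxEig_eq, hE, Real.sInf_empty]
    simp only [h0]
    exact tendsto_const_nhds
  case pos =>
    simp only [minMaxEig_eq]
    obtain ⟨L₀, hL₀⟩ := hP
    have hj0 : j ≠ 0 := by omega
    obtain ⟨w, hwL, hw⟩ := eigD_nonempty hj0 hL₀
    have hwn : 0 < ‖w‖ := norm_pos_iff.mpr hw
    have hιw : (0:ℝ) < ‖ι w‖ := by
      rw [norm_pos_iff]
      intro h0
      exact hw (hι (by rw [h0, map_zero]))
    have hKpos : 0 < K := by nlinarith [hK w]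
    have hCB : 0 < CB := by
      have h1 := hBcoer t (ι w)
      have h2 := le_trans (le_abs_self _) (hBbdd t (ι w) (ι w))
      nlinarith [mul_pos hιw hιw, pow_two ‖ι w‖]
    have hCA : 0 < CA := by
      have h1 := hAcoer t w
      have h2 := le_trans (le_abs_self _) (hAbdd t w w)
      nlinarith [mul_pos hwn hwn, pow_two ‖w‖]
    set m : ℝ := δ / (CB * K^2) with hm_def
    have hm : 0 < m := by positivity
    -- positivity of the forms on nonzero vectors
    have hApos : ∀ (s : ℝ) (v : V), v ≠ 0 → 0 < A s v v := by
      intro s v hv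
      have := hAcoer s v
      nlinarith [pow_pos (norm_pos_iff.mpr hv) 2]
    have hBpos : ∀ (s : ℝ) (v : V), v ≠ 0 → 0 < B s (ι v) (ι v) := by
      intro s v hv
      have hιv : ι v ≠ 0 := fun h0 => hv (hι (by rw [h0, map_zero]))
      have := hBcoer s (ι v)
      nlinarith [pow_pos (norm_pos_iff.mpr hιv) 2]
    -- lower bound on Rayleigh quotients
    have hRlb : ∀ (s : ℝ) (v : V), v ≠ 0 → m ≤ A s v v / B s (ι v) (ι v) := by
      intro s v hv
      have hb := hBpos s v hv
      rw [le_div_iff₀ hb]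
      have h1 : B s (ι v) (ι v) ≤ CB * K^2 * ‖v‖^2 := by
        have h2 := le_trans (le_abs_self _) (hBbdd s (ι v) (ι v))
        nlinarith [hK v, norm_nonneg (ι v), norm_nonneg v,
          mul_le_mul (hK v) (hK v) (norm_nonneg (ι v)) (by positivity : (0:ℝ) ≤ K * ‖v‖)]
      have hmK : m * (CB * K^2) = δ := by
        rw [hm_def]
        field_simp
      have t1 : m * B s (ι v) (ι v) ≤ m * (CB * K^2 * ‖v‖^2) :=
        mul_le_mul_of_nonneg_left h1 hm.le
      have t2 : m * (CB * K^2 * ‖v‖^2) = δ * ‖v‖^2 := by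
        rw [← hmK]; ring
      linarith [hAcoer s v]
    -- upper bound (boundedness of Rayleigh images on finite-dim subspaces)
    have hRub : ∀ (s : ℝ) (L : Submodule ℝ V), Module.finrank ℝ L = j →
        BddAbove ((fun v => A s v v / B s (ι v) (ι v)) '' eigD L) := by
      intro s L hL
      haveI : FiniteDimensional ℝ L := FiniteDimensional.of_finrank_pos (by rw [hL]; omega)
      obtain ⟨c, hc0, hcl⟩ := antilip ι hι L
      refine ⟨CA / (δ * c^2), ?_⟩
      rintro y ⟨v, ⟨hvL, hv0⟩, rfl⟩
      have hb := hBpos s v hv0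
      have hvn : 0 < ‖v‖ := norm_pos_iff.mpr hv0
      have hub : A s v v / B s (ι v) (ι v) ≤ CA / (δ * c^2) := by
        rw [div_le_div_iff₀ hb (by positivity)]
        have hA1 : A s v v ≤ CA * ‖v‖ * ‖v‖ := le_trans (le_abs_self _) (hAbdd s v v)
        have hB1 : δ * ‖ι v‖^2 ≤ B s (ι v) (ι v) := hBcoer s (ι v)
        have hcv : c * ‖v‖ ≤ ‖ι v‖ := hcl v hvL
        have hsq : (c*‖v‖) * (c*‖v‖) ≤ ‖ι v‖ * ‖ι v‖ :=
          mul_self_le_mul_self (by positivity) hcv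
        have t1 := mul_le_mul_of_nonneg_right hA1 (show (0:ℝ) ≤ δ*c^2 by positivity)
        have t2 := mul_le_mul_of_nonneg_left hsq (show (0:ℝ) ≤ CA*δ by positivity)
        have t3 := mul_le_mul_of_nonneg_left hB1 hCA.le
        nlinarith [t1, t2, t3]
      exact hub
    have hlam : m ≤ sInf (eigSet (fun v : V => A t v v / B t (ι v) (ι v)) j) :=
      eig_lb _ j hj0 m (hRlb t) (hRub t) ⟨L₀, hL₀⟩
    set lam := sInf (eigSet (fun v : V => A t v v / B t (ι v) (ι v)) j) with hlam_def
    have hlampos : 0 < lam := lt_of_lt_of_le hm hlam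
    rw [Metric.tendsto_nhds_nhds]
    intro ε₀ hε₀
    set θ : ℝ := min (1/4) (ε₀ / (5 * lam)) with hθ_def
    have hθpos : 0 < θ := lt_min (by norm_num) (by positivity)
    have hθ14 : θ ≤ 1/4 := min_le_left _ _
    have hθε : θ * lam ≤ ε₀ / 5 := by
      have h1 : θ ≤ ε₀ / (5 * lam) := min_le_right _ _
      have h2 := mul_le_mul_of_nonneg_right h1 hlampos.le
      calc θ * lam ≤ ε₀ / (5 * lam) * lam := h2
        _ = ε₀ / 5 := by field_simp
    obtain ⟨ηA, hηA0, hηA⟩ := hAconv (θ * δ) (by positivity)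
    obtain ⟨ηB, hηB0, hηB⟩ := hBconv (θ * δ) (by positivity)
    refine ⟨min ηA ηB, lt_min hηA0 hηB0, ?_⟩
    intro h hh
    rw [Real.dist_eq, sub_zero] at hh
    have hhA := hηA h (lt_of_lt_of_le hh (min_le_left _ _))
    have hhB := hηB h (lt_of_lt_of_le hh (min_le_right _ _))
    have hAd := diag_scale (A (t+h)) (A t) (θ*δ) (by positivity) hhA
    have hBd := diag_scale (B (t+h)) (B t) (θ*δ) (by positivity) hhB
    have hcomp : ∀ v : V, v ≠ 0 →
        (1 - 2*θ) * (A t v v / B t (ι v) (ι v)) ≤ A (t+h) v v / B (t+h) (ι v) (ι v) ∧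
        A (t+h) v v / B (t+h) (ι v) (ι v) ≤ (1 + 4*θ) * (A t v v / B t (ι v) (ι v)) := by
      intro v hv
      refine quot_bounds hθpos.le (by linarith) (hApos t v hv) (hBpos t v hv) ?_ ?_
      · calc |A (t+h) v v - A t v v| ≤ θ*δ*‖v‖^2 := hAd v
          _ = θ*(δ*‖v‖^2) := by ring
          _ ≤ θ * A t v v := mul_le_mul_of_nonneg_left (hAcoer t v) hθpos.le
      · calc |B (t+h) (ι v) (ι v) - B t (ι v) (ι v)| ≤ θ*δ*‖ι v‖^2 := hBd (ι v)
          _ = θ*(δ*‖ι v‖^2) := by ring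
          _ ≤ θ * B t (ι v) (ι v) := mul_le_mul_of_nonneg_left (hBcoer t (ι v)) hθpos.le
    set lam' := sInf (eigSet (fun v : V => A (t+h) v v / B (t+h) (ι v) (ι v)) j) with hlam'_def
    have hup : lam' ≤ (1 + 4*θ) * lam :=
      eig_comp _ _ j hj0 (1 + 4*θ) m (by linarith) (hRlb (t+h)) (hRub (t+h)) (hRub t)
        (fun v hv => (hcomp v hv).2) ⟨L₀, hL₀⟩
    have h2θ : (0:ℝ) < 1 - 2*θ := by linarith
    have hlow : lam ≤ (1 - 2*θ)⁻¹ * lam' := by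
      refine eig_comp _ _ j hj0 ((1 - 2*θ)⁻¹) m (by positivity) (hRlb t) (hRub t) (hRub (t+h))
        (fun v hv => ?_) ⟨L₀, hL₀⟩
      rw [inv_mul_eq_div, le_div_iff₀ h2θ]
      have := (hcomp v hv).1
      linarith
    have hlow' : (1 - 2*θ) * lam ≤ lam' := by
      have h3 := mul_le_mul_of_nonneg_left hlow h2θ.le
      have h4 : (1 - 2*θ) * ((1 - 2*θ)⁻¹ * lam') = lam' := by
        field_simp
      linarith
    have hθlam : θ * lam ≤ ε₀ / 5 := hθε
    rw [Real.dist_eq, abs_sub_lt_iff]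
    constructor
    · nlinarith
    · nlinarith
end

section
/- Let V be a real Hilbert space decomposed as V = V_0 ⊕ V_1 (B-orthogonal direct sum), and let C be a symmetric bounded bilinear form on V that is negative definite on V_0 × V_0, positive definite (coercive) on V_1 × V_1, and satisfies C(w_0, v) = C(w_0, Qv) and C(w_1, v) = C(w_1, (I−Q)v) for w_0 ∈ V_0, w_1 ∈ V_1, where Q is the projection onto V_0. Then for every bounded linear functional f on V there exists a unique w ∈ V with C(w, v) = f(v) for all v ∈ V. -/
/-!
The reflection `T = I - 2Q` flips the sign of `C` on `V₀` while keeping it on `V₁`, and the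
cross terms vanish, so `(u, v) ↦ C u (T v)` is coercive. Lax–Milgram solves
`C w (T v) = f (T v)` for all `v`, which is the claim because `T` is an involution.
-/

open InnerProductSpace

section LaxMilgram

variable {V : Type*} [NormedAddCommGroup V] [InnerProductSpace ℝ V] [CompleteSpace V]

theorem IsCoercive.existsUnique_apply_eq {B : V →L[ℝ] V →L[ℝ] ℝ} (hB : IsCoercive B)
    (f : V →L[ℝ] ℝ) : ∃! w : V, ∀ v : V, B w v = f v := by
  have hsolves_iff : ∀ w, (∀ v, B w v = f v) ↔
      w = hB.continuousLinearEquivOfBilin.symm ((toDual ℝ V).symm f) := fun w => by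
    simp only [← hB.continuousLinearEquivOfBilin_apply, ContinuousLinearEquiv.eq_symm_apply,
      LinearIsometryEquiv.eq_symm_apply, ContinuousLinearMap.ext_iff, toDual_apply_apply]
  exact (existsUnique_congr hsolves_iff).2 existsUnique_eq

/-- `(B.flip.comp T).flip` is the form `(u, v) ↦ B u (T v)`. -/
theorem existsUnique_apply_eq_of_isCoercive_comp (B : V →L[ℝ] V →L[ℝ] ℝ) {T : V →L[ℝ] V}
    (hT : Function.Surjective T) (hBT : IsCoercive (B.flip.comp T).flip) (f : V →L[ℝ] ℝ) :
    ∃! w : V, ∀ v : V, B w v = f v :=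
  (existsUnique_congr fun _ => hT.forall).2 (hBT.existsUnique_apply_eq (f.comp T))

end LaxMilgram

theorem apply_eq_zero_of_disjoint {R V : Type*} [Ring R] [AddCommGroup V] [Module R V]
    {V₀ V₁ : Submodule R V} (h : Disjoint V₀ V₁) {Q : V → V} (hQ : ∀ v, Q v ∈ V₀)
    (hQ' : ∀ v, v - Q v ∈ V₁) {u : V} (hu : u ∈ V₁) : Q u = 0 := by
  refine Submodule.disjoint_def.mp h _ (hQ u) ?_
  simpa using V₁.sub_mem hu (hQ' u)

theorem min_mul_norm_add_sq_le_apply_add_sub {V : Type*} [SeminormedAddCommGroup V]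
    [Module ℝ V] (C : V →ₗ[ℝ] V →ₗ[ℝ] ℝ) {p q : V} (hpq : C p q = 0) (hqp : C q p = 0)
    {δ₀ δ₁ : ℝ} (hδ₀ : 0 ≤ δ₀) (hδ₁ : 0 ≤ δ₁) (hp : δ₀ * ‖p‖ ^ 2 ≤ -C p p)
    (hq : δ₁ * ‖q‖ ^ 2 ≤ C q q) :
    min δ₀ δ₁ / 2 * ‖p + q‖ ^ 2 ≤ C (p + q) (q - p) := by
  have hC : C (p + q) (q - p) = -C p p + C q q := by
    simp only [map_add, map_sub, LinearMap.add_apply, hpq, hqp]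
    ring
  have hnorm : ‖p + q‖ ^ 2 ≤ 2 * (‖p‖ ^ 2 + ‖q‖ ^ 2) := by
    nlinarith [norm_add_le p q, norm_nonneg (p + q), sq_nonneg (‖p‖ - ‖q‖)]
  have hmin : 0 ≤ min δ₀ δ₁ := le_min hδ₀ hδ₁
  calc min δ₀ δ₁ / 2 * ‖p + q‖ ^ 2 ≤ min δ₀ δ₁ * (‖p‖ ^ 2 + ‖q‖ ^ 2) := by nlinarith
    _ ≤ δ₀ * ‖p‖ ^ 2 + δ₁ * ‖q‖ ^ 2 := by
      nlinarith [min_le_left δ₀ δ₁, min_le_right δ₀ δ₁, sq_nonneg ‖p‖, sq_nonneg ‖q‖]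
    _ ≤ C (p + q) (q - p) := by rw [hC]; linarith

theorem hadamard_stmt6_general
    {V : Type*} [NormedAddCommGroup V] [InnerProductSpace ℝ V] [CompleteSpace V]
    (V₀ V₁ : Submodule ℝ V) (hcompl : IsCompl V₀ V₁)
    (Q : V →L[ℝ] V)
    (hQproj : ∀ v : V, Q v ∈ V₀) (hQid : ∀ v ∈ V₀, Q v = v)
    (hQ'proj : ∀ v : V, v - Q v ∈ V₁)
    (C : V →ₗ[ℝ] V →ₗ[ℝ] ℝ)
    (M : ℝ) (hCbdd : ∀ u v : V, |C u v| ≤ M * ‖u‖ * ‖v‖)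
    (δ₀ : ℝ) (hδ₀ : 0 < δ₀) (hneg : ∀ v ∈ V₀, C v v ≤ -δ₀ * ‖v‖ ^ 2)
    (δ₁ : ℝ) (hδ₁ : 0 < δ₁) (hpos : ∀ v ∈ V₁, δ₁ * ‖v‖ ^ 2 ≤ C v v)
    (hcross₀ : ∀ w₀ ∈ V₀, ∀ v : V, C w₀ v = C w₀ (Q v))
    (hcross₁ : ∀ w₁ ∈ V₁, ∀ v : V, C w₁ v = C w₁ (v - Q v))
    (f : V →L[ℝ] ℝ) :
    ∃! w : V, ∀ v : V, C w v = f v := by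
  have hQQ (v : V) : Q (Q v) = Q v := hQid _ (hQproj v)
  have hCbdd' (u v : V) : ‖C u v‖ ≤ |M| * ‖u‖ * ‖v‖ :=
    (hCbdd u v).trans (by gcongr; exact le_abs_self M)
  let T : V →L[ℝ] V := .id ℝ V - (2 : ℝ) • Q
  have hT : Function.Involutive T := fun v => by
    simp only [T, sub_apply, smul_apply, ContinuousLinearMap.id_apply, map_sub, map_smul, hQQ]
    module
  refine existsUnique_apply_eq_of_isCoercive_comp (C.mkContinuous₂ |M| hCbdd') hT.surjective
    ⟨min δ₀ δ₁ / 2, by positivity, fun v => ?_⟩ f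
  have hv : Q v + (v - Q v) = v := add_sub_cancel _ _
  have hTv : (v - Q v) - Q v = T v := by
    simp only [T, sub_apply, smul_apply, ContinuousLinearMap.id_apply]
    module
  calc min δ₀ δ₁ / 2 * ‖v‖ * ‖v‖ = min δ₀ δ₁ / 2 * ‖Q v + (v - Q v)‖ ^ 2 := by rw [hv]; ring
    _ ≤ C (Q v + (v - Q v)) ((v - Q v) - Q v) := by
      refine min_mul_norm_add_sq_le_apply_add_sub C ?_ ?_ hδ₀.le hδ₁.le ?_
        (hpos _ (hQ'proj v))
      · rw [hcross₀ _ (hQproj v), apply_eq_zero_of_disjoint hcompl.disjoint hQproj hQ'proj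
          (hQ'proj v), map_zero]
      · rw [hcross₁ _ (hQ'proj v), hQQ, sub_self, map_zero]
      · linarith [hneg _ (hQproj v)]
    _ = C v (T v) := by rw [hv, hTv]

/-- unique solvability of `C(w,·) = f` for a symmetric bounded bilinear
form `C` that is negative definite on `V₀` and positive definite on `V₁`, where
`V = V₀ ⊕ V₁` with projection `Q` onto `V₀`, `I − Q` onto `V₁`, and the
cross-orthogonality conditions hold. -/
theorem hadamard_stmt6
    {V : Type*} [NormedAddCommGroup V] [InnerProductSpace ℝ V] [CompleteSpace V]
    (V₀ V₁ : Submodule ℝ V) (hcompl : IsCompl V₀ V₁)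
    (Q : V →L[ℝ] V)
    (hQproj : ∀ v : V, Q v ∈ V₀) (hQid : ∀ v ∈ V₀, Q v = v)
    (hQ'proj : ∀ v : V, v - Q v ∈ V₁)
    (C : V →ₗ[ℝ] V →ₗ[ℝ] ℝ)
    (hCsymm : ∀ u v : V, C u v = C v u)
    (M : ℝ) (hCbdd : ∀ u v : V, |C u v| ≤ M * ‖u‖ * ‖v‖)
    (δ₀ : ℝ) (hδ₀ : 0 < δ₀) (hneg : ∀ v ∈ V₀, C v v ≤ -δ₀ * ‖v‖ ^ 2)
    (δ₁ : ℝ) (hδ₁ : 0 < δ₁) (hpos : ∀ v ∈ V₁, δ₁ * ‖v‖ ^ 2 ≤ C v v)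
    (hcross₀ : ∀ w₀ ∈ V₀, ∀ v : V, C w₀ v = C w₀ (Q v))
    (hcross₁ : ∀ w₁ ∈ V₁, ∀ v : V, C w₁ v = C w₁ (v - Q v))
    (f : V →L[ℝ] ℝ) :
    ∃! w : V, ∀ v : V, C w v = f v :=
  hadamard_stmt6_general V₀ V₁ hcompl Q hQproj hQid hQ'proj C M hCbdd δ₀ hδ₀ hneg δ₁ hδ₁ hpos
    hcross₀ hcross₁ f
end

section
/- Under the hypotheses of the one-sided differentiability theorem (multiple eigenvalue λ of multiplicity m at t with eigenspace Y, E = Ȧ_t − λḂ_t), the one-sided derivatives satisfy the monotonicity λ̇_k^+(t) ≤ λ̇_{k+1}^+(t) ≤ ⋯ ≤ λ̇_{k+m−1}^+(t) and λ̇_k^−(t) ≥ λ̇_{k+1}^−(t) ≥ ⋯ ≥ λ̇_{k+m−1}^−(t). -/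
/-- In a finite-dimensional submodule, there is a submodule of any smaller finrank. -/
lemma hstmt8_exists_sub {V : Type*} [AddCommGroup V] [Module ℝ V]
    (W : Submodule ℝ V) [FiniteDimensional ℝ W] (j : ℕ) (hj : j ≤ Module.finrank ℝ W) :
    ∃ L : Submodule ℝ V, L ≤ W ∧ Module.finrank ℝ L = j := by
  classical
  let b := Module.finBasis ℝ W
  let f : Fin j → V := fun i => (b (Fin.castLE hj i) : V)
  have hli : LinearIndependent ℝ f := by
    have h1 : LinearIndependent ℝ (fun i : Fin j => b (Fin.castLE hj i)) :=
      b.linearIndependent.comp _ (Fin.castLE_injective hj)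
    exact h1.map' W.subtype (Submodule.ker_subtype W)
  refine ⟨Submodule.span ℝ (Set.range f), ?_, ?_⟩
  · rw [Submodule.span_le]
    rintro x ⟨i, rfl⟩
    exact (b (Fin.castLE hj i)).2
  · rw [finrank_span_eq_card hli, Fintype.card_fin]

/-- The Rayleigh quotients over a finite-dimensional subspace are bounded above. -/
lemma hstmt8_bdd {V X : Type*} [NormedAddCommGroup V] [InnerProductSpace ℝ V]
    [NormedAddCommGroup X] [InnerProductSpace ℝ X]
    (ι : V →L[ℝ] X) (hι : Function.Injective ι)
    (Af : V →ₗ[ℝ] V →ₗ[ℝ] ℝ) (Bf : X →ₗ[ℝ] X →ₗ[ℝ] ℝ)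
    (CA : ℝ) (hAbdd : ∀ u v : V, |Af u v| ≤ CA * ‖u‖ * ‖v‖)
    (δ : ℝ) (hδ : 0 < δ)
    (hAcoer : ∀ v : V, δ * ‖v‖ ^ 2 ≤ Af v v)
    (hBcoer : ∀ v : X, δ * ‖v‖ ^ 2 ≤ Bf v v)
    (L : Submodule ℝ V) [FiniteDimensional ℝ L] :
    BddAbove ((fun v => Af v v / Bf (ι v) (ι v)) '' {v : V | v ∈ L ∧ v ≠ 0}) := by
  set g : L →ₗ[ℝ] X := ι.toLinearMap.comp L.subtype with hg
  have hginj : Function.Injective g := hι.comp (Submodule.injective_subtype L)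
  obtain ⟨K, hK0, hKa⟩ := g.exists_antilipschitzWith (LinearMap.ker_eq_bot.mpr hginj)
  have hc : ∀ w : L, (K : ℝ)⁻¹ * ‖(w : V)‖ ≤ ‖ι (w : V)‖ := by
    intro w
    have h1 : ‖w‖ ≤ (K : ℝ) * ‖g w‖ := by
      have := hKa.le_mul_dist w 0
      simpa [dist_eq_norm] using this
    have hKpos : (0:ℝ) < K := hK0
    rw [inv_mul_le_iff₀ hKpos]
    simpa [hg, LinearMap.comp_apply] using h1
  refine ⟨CA / (δ * ((K:ℝ)⁻¹)^2), ?_⟩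
  rintro x ⟨v, ⟨hvL, hv0⟩, rfl⟩
  have hvn : (0:ℝ) < ‖v‖ := norm_pos_iff.mpr hv0
  have hcv : (K : ℝ)⁻¹ * ‖v‖ ≤ ‖ι v‖ := hc ⟨v, hvL⟩
  have hKpos : (0:ℝ) < (K:ℝ)⁻¹ := by positivity
  have hB1 : δ * ((K:ℝ)⁻¹^2 * ‖v‖^2) ≤ Bf (ι v) (ι v) := by
    refine le_trans ?_ (hBcoer (ι v))
    have h2 : ((K:ℝ)⁻¹ * ‖v‖)^2 ≤ ‖ι v‖^2 := by
      apply pow_le_pow_left₀ (by positivity) hcv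
    nlinarith
  have hBpos : (0:ℝ) < δ * ((K:ℝ)⁻¹^2 * ‖v‖^2) := by positivity
  have hA1 : Af v v ≤ CA * ‖v‖^2 := by
    have h3 := le_of_abs_le (hAbdd v v)
    nlinarith
  have hA0 : (0:ℝ) ≤ CA * ‖v‖^2 := by
    have := hAcoer v
    nlinarith
  have := div_le_div₀ hA0 hA1 hBpos hB1
  refine le_trans this (le_of_eq ?_)
  field_simp

/-- Every element of the defining set of `minMaxEig` is nonnegative. -/
lemma hstmt8_elem_nonneg {V : Type*} [AddCommGroup V] [Module ℝ V]
    (Af Bf : V → V → ℝ)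
    (hA : ∀ v : V, 0 ≤ Af v v) (hB : ∀ v : V, 0 ≤ Bf v v) (j : ℕ) :
    ∀ μ ∈ {μ : ℝ | ∃ L : Submodule ℝ V, Module.finrank ℝ L = j ∧
      μ = sSup ((fun v => Af v v / Bf v v) '' {v : V | v ∈ L ∧ v ≠ 0})}, 0 ≤ μ := by
  rintro μ ⟨L, hL, rfl⟩
  apply Real.sSup_nonneg
  rintro x ⟨v, _, rfl⟩
  exact div_nonneg (hA v) (hB v)

lemma hstmt8_nonneg {V : Type*} [AddCommGroup V] [Module ℝ V]
    (Af Bf : V → V → ℝ)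
    (hA : ∀ v : V, 0 ≤ Af v v) (hB : ∀ v : V, 0 ≤ Bf v v) (j : ℕ) :
    0 ≤ minMaxEig Af Bf j :=
  Real.sInf_nonneg (hstmt8_elem_nonneg Af Bf hA hB j)

lemma hstmt8_empty {V : Type*} [AddCommGroup V] [Module ℝ V] (Af Bf : V → V → ℝ) (j : ℕ)
    (h : ∀ L : Submodule ℝ V, Module.finrank ℝ L ≠ j) : minMaxEig Af Bf j = 0 := by
  unfold minMaxEig
  have he : {μ : ℝ | ∃ L : Submodule ℝ V, Module.finrank ℝ L = j ∧
      μ = sSup ((fun v => Af v v / Bf v v) '' {v : V | v ∈ L ∧ v ≠ 0})} = ∅ :=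
    Set.eq_empty_iff_forall_notMem.mpr (fun μ ⟨L, hL, _⟩ => h L hL)
  rw [he, Real.sInf_empty]

/-- Monotonicity of `minMaxEig` in the index. -/
lemma hstmt8_mono {V X : Type*} [NormedAddCommGroup V] [InnerProductSpace ℝ V]
    [NormedAddCommGroup X] [InnerProductSpace ℝ X]
    (ι : V →L[ℝ] X) (hι : Function.Injective ι)
    (Af : V →ₗ[ℝ] V →ₗ[ℝ] ℝ) (Bf : X →ₗ[ℝ] X →ₗ[ℝ] ℝ)
    (CA : ℝ) (hAbdd : ∀ u v : V, |Af u v| ≤ CA * ‖u‖ * ‖v‖)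
    (δ : ℝ) (hδ : 0 < δ)
    (hAcoer : ∀ v : V, δ * ‖v‖ ^ 2 ≤ Af v v)
    (hBcoer : ∀ v : X, δ * ‖v‖ ^ 2 ≤ Bf v v)
    (j : ℕ) (hj : 1 ≤ j)
    (hex : ∃ W : Submodule ℝ V, Module.finrank ℝ W = j + 1) :
    minMaxEig (fun u v : V => Af u v) (fun u v : V => Bf (ι u) (ι v)) j ≤
      minMaxEig (fun u v : V => Af u v) (fun u v : V => Bf (ι u) (ι v)) (j + 1) := by
  have hAnn : ∀ v : V, 0 ≤ Af v v := fun v => le_trans (by positivity) (hAcoer v)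
  have hBnn : ∀ v : V, 0 ≤ Bf (ι v) (ι v) := fun v => le_trans (by positivity) (hBcoer (ι v))
  obtain ⟨W, hW⟩ := hex
  unfold minMaxEig
  have hne : Set.Nonempty {μ : ℝ | ∃ L : Submodule ℝ V, Module.finrank ℝ L = j + 1 ∧
      μ = sSup ((fun v : V => Af v v / Bf (ι v) (ι v)) '' {v : V | v ∈ L ∧ v ≠ 0})} :=
    ⟨_, W, hW, rfl⟩
  apply le_csInf hne
  rintro μ ⟨L, hL, rfl⟩
  have hLfd : FiniteDimensional ℝ L := .of_finrank_pos (by rw [hL]; omega)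
  obtain ⟨L', hL'le, hL'⟩ := hstmt8_exists_sub L j (by rw [hL]; omega)
  have hmem : sSup ((fun v : V => Af v v / Bf (ι v) (ι v)) '' {v : V | v ∈ L' ∧ v ≠ 0}) ∈
      {μ : ℝ | ∃ M : Submodule ℝ V, Module.finrank ℝ M = j ∧
        μ = sSup ((fun v : V => Af v v / Bf (ι v) (ι v)) '' {v : V | v ∈ M ∧ v ≠ 0})} :=
    ⟨L', hL', rfl⟩
  refine le_trans (csInf_le ⟨0, fun x hx =>
    hstmt8_elem_nonneg (fun u v : V => Af u v) (fun u v : V => Bf (ι u) (ι v))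
      hAnn hBnn j x hx⟩ hmem) ?_
  apply csSup_le_csSup (hstmt8_bdd ι hι Af Bf CA hAbdd δ hδ hAcoer hBcoer L)
  · have hne : L' ≠ ⊥ := by
      intro h
      rw [h] at hL'
      simp [finrank_bot] at hL'
      omega
    obtain ⟨v, hv, hv0⟩ := Submodule.exists_mem_ne_zero_of_ne_bot hne
    exact ⟨_, v, ⟨hv, hv0⟩, rfl⟩
  · rintro x ⟨v, ⟨hvL', hv0⟩, rfl⟩
    exact ⟨v, ⟨hL'le hvL', hv0⟩, rfl⟩

/-- monotonicity of the one-sided derivatives over a multiple eigenvalue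
cluster: `λ̇_k⁺(t) ≤ ⋯ ≤ λ̇_{k+m−1}⁺(t)` and `λ̇_k⁻(t) ≥ ⋯ ≥ λ̇_{k+m−1}⁻(t)`. -/
theorem hadamard_stmt8
    {V : Type*} [NormedAddCommGroup V] [InnerProductSpace ℝ V] [CompleteSpace V]
    {X : Type*} [NormedAddCommGroup X] [InnerProductSpace ℝ X] [CompleteSpace X]
    (ι : V →L[ℝ] X) (hι : Function.Injective ι) (hcompact : IsCompactOperator ι)
    (A : ℝ → V →ₗ[ℝ] V →ₗ[ℝ] ℝ) (B : ℝ → X →ₗ[ℝ] X →ₗ[ℝ] ℝ)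
    (hAsymm : ∀ t', ∀ u v : V, A t' u v = A t' v u)
    (hBsymm : ∀ t', ∀ u v : X, B t' u v = B t' v u)
    (CA : ℝ) (hAbdd : ∀ t', ∀ u v : V, |A t' u v| ≤ CA * ‖u‖ * ‖v‖)
    (CB : ℝ) (hBbdd : ∀ t', ∀ u v : X, |B t' u v| ≤ CB * ‖u‖ * ‖v‖)
    (δ : ℝ) (hδ : 0 < δ)
    (hAcoer : ∀ t', ∀ v : V, δ * ‖v‖ ^ 2 ≤ A t' v v)
    (hBcoer : ∀ t', ∀ v : X, δ * ‖v‖ ^ 2 ≤ B t' v v)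
    (lam : ℕ → ℝ → ℝ)
    (hlamdef : ∀ j t', lam j t' =
      minMaxEig (fun u v : V => A t' u v) (fun u v : V => B t' (ι u) (ι v)) j)
    (t : ℝ)
    (A' : V →ₗ[ℝ] V →ₗ[ℝ] ℝ) (B' : X →ₗ[ℝ] X →ₗ[ℝ] ℝ)
    (CA' : ℝ) (hA'bdd : ∀ u v : V, |A' u v| ≤ CA' * ‖u‖ * ‖v‖)
    (CB' : ℝ) (hB'bdd : ∀ u v : X, |B' u v| ≤ CB' * ‖u‖ * ‖v‖)
    (hAder : ∀ ε > (0:ℝ), ∃ η > (0:ℝ), ∀ h : ℝ, h ≠ 0 → |h| < η →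
      ∀ u v : V, ‖u‖ ≤ 1 → ‖v‖ ≤ 1 →
        |A (t + h) u v - A t u v - h * A' u v| ≤ ε * |h|)
    (hBder : ∀ ε > (0:ℝ), ∃ η > (0:ℝ), ∀ h : ℝ, h ≠ 0 → |h| < η →
      ∀ u v : X, ‖u‖ ≤ 1 → ‖v‖ ≤ 1 →
        |B (t + h) u v - B t u v - h * B' u v| ≤ ε * |h|)
    (k m : ℕ) (hk : 1 ≤ k) (hm : 1 ≤ m)
    (hlow : 2 ≤ k → lam (k - 1) t < lam k t)
    (heqmult : ∀ j, k ≤ j → j ≤ k + m - 1 → lam j t = lam k t)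
    (hhigh : lam (k + m - 1) t < lam (k + m) t)
    -- `dp j`, `dm j` : the one-sided derivatives `λ̇_j⁺(t)`, `λ̇_j⁻(t)`
    (dp dm : ℕ → ℝ)
    (hdp : ∀ j, k ≤ j → j ≤ k + m - 1 →
      Filter.Tendsto (fun h : ℝ => (lam j (t + h) - lam j t) / h)
        (nhdsWithin 0 (Set.Ioi 0)) (nhds (dp j)))
    (hdm : ∀ j, k ≤ j → j ≤ k + m - 1 →
      Filter.Tendsto (fun h : ℝ => (lam j (t + h) - lam j t) / h)
        (nhdsWithin 0 (Set.Iio 0)) (nhds (dm j))) :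
    ∀ j, k ≤ j → j + 1 ≤ k + m - 1 → dp j ≤ dp (j + 1) ∧ dm (j + 1) ≤ dm j := by
  
  intro j hjk hjle
  have hk1 : 1 ≤ j := le_trans hk hjk
  have hAnn : ∀ t' (v : V), 0 ≤ A t' v v := fun t' v => le_trans (by positivity) (hAcoer t' v)
  have hBnn : ∀ t' (v : V), 0 ≤ B t' (ι v) (ι v) :=
    fun t' v => le_trans (by positivity) (hBcoer t' (ι v))
  have hlamnn : ∀ i t', 0 ≤ lam i t' := fun i t' => by
    rw [hlamdef]
    exact hstmt8_nonneg _ _ (hAnn t') (hBnn t') i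
  have hexW : ∃ W : Submodule ℝ V, Module.finrank ℝ W = k + m := by
    by_contra hno
    push_neg at hno
    have h0 : lam (k + m) t = 0 := by
      rw [hlamdef]
      exact hstmt8_empty _ _ _ hno
    have h1 := hlamnn (k + m - 1) t
    rw [h0] at hhigh
    linarith
  obtain ⟨W, hW⟩ := hexW
  have hWfd : FiniteDimensional ℝ W := .of_finrank_pos (by rw [hW]; omega)
  have hex : ∃ L : Submodule ℝ V, Module.finrank ℝ L = j + 1 := by
    obtain ⟨L, _, hL⟩ := hstmt8_exists_sub W (j + 1) (by rw [hW]; omega)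
    exact ⟨L, hL⟩
  have key : ∀ t', lam j t' ≤ lam (j + 1) t' := fun t' => by
    rw [hlamdef j t', hlamdef (j + 1) t']
    exact hstmt8_mono ι hι (A t') (B t') CA (hAbdd t') δ hδ (hAcoer t') (hBcoer t') j hk1 hex
  have heqj : lam j t = lam k t := heqmult j hjk (by omega)
  have heqj1 : lam (j + 1) t = lam k t := heqmult (j + 1) (by omega) hjle
  constructor
  · refine le_of_tendsto_of_tendsto (hdp j hjk (by omega)) (hdp (j + 1) (by omega) hjle) ?_
    filter_upwards [self_mem_nhdsWithin] with h hh
    have hhp : (0 : ℝ) < h := hh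
    have h1 : lam j (t + h) - lam j t ≤ lam (j + 1) (t + h) - lam (j + 1) t := by
      have := key (t + h)
      rw [heqj, heqj1]
      linarith
    exact div_le_div_of_nonneg_right h1 hhp.le
  · refine le_of_tendsto_of_tendsto (hdm (j + 1) (by omega) hjle) (hdm j hjk (by omega)) ?_
    filter_upwards [self_mem_nhdsWithin] with h hh
    have hhn : h < 0 := hh
    have h1 : lam j (t + h) - lam j t ≤ lam (j + 1) (t + h) - lam (j + 1) t := by
      have := key (t + h)
      rw [heqj, heqj1]
      linarith
    exact (div_le_div_right_of_neg hhn).mpr h1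
end

section
/- Let f_1 ≤ ⋯ ≤ f_m be continuous real functions on an interval I such that at each t ∈ I one-sided derivatives ḟ_j^±(t) exist, are unilaterally continuous, and whenever f_{k−1}(t) < f_k(t) = ⋯ = f_{k+n−1}(t) < f_{k+n}(t) one has the crossing relation ḟ_j^+(t) = ḟ_{2k+n−j−1}^−(t) for k ≤ j ≤ k+n−1. If t is a point where some n-cluster K = {k,…,k+n−1} has positive p-value (i.e. ḟ_k^+(t) < ḟ_{k+n−1}^+(t)), then f_{k+n−1}(t') > f_k(t') for all t' ≠ t sufficiently close to t; consequently the set of such t is discrete (each such point is isolated), hence at most countable. -/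
/-!
Let `K = k + n - 1`. Since `f_k(t) = f_K(t)`, the right slope of `f_K - f_k` at `t` tends to
`ḟ_K⁺(t) - ḟ_k⁺(t) > 0`, so `f_k < f_K` just to the right of `t`. The crossing relation swaps the
two ends of the cluster, `ḟ_k⁺ = ḟ_K⁻` and `ḟ_K⁺ = ḟ_k⁻`, so the left slope of `f_K - f_k` tends to
`ḟ_k⁺(t) - ḟ_K⁺(t) < 0`, and `f_k < f_K` just to the left of `t` as well. Hence no point near `t`
carries the same cluster: the points of positive `p`-value form, for each `(k, n)`, a discrete
subset of `ℝ`, which is countable.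
-/

open Filter Topology

/-- `IsCluster f m k n t` : at the point `t`, the values `f_k(t) = ⋯ = f_{k+n−1}(t)`
form an `n`-cluster with entry `k` among `f_1 ≤ ⋯ ≤ f_m`, i.e.
`f_{k−1}(t) < f_k(t) = ⋯ = f_{k+n−1}(t) < f_{k+n}(t)`
(with the conventions `f_0 = −∞`, `f_{m+1} = +∞`). -/
def IsCluster (f : ℕ → ℝ → ℝ) (m k n : ℕ) (t : ℝ) : Prop :=
  1 ≤ k ∧ 1 ≤ n ∧ k + n - 1 ≤ m ∧
  (2 ≤ k → f (k - 1) t < f k t) ∧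
  (∀ j, k ≤ j → j ≤ k + n - 1 → f j t = f k t) ∧
  (k + n ≤ m → f (k + n - 1) t < f (k + n) t)

theorem Set.Countable.of_forall_eventually_notMem {X : Type*} [TopologicalSpace X]
    [HereditarilyLindelofSpace X] {s : Set X} (h : ∀ x ∈ s, ∀ᶠ y in 𝓝[≠] x, y ∉ s) :
    s.Countable :=
  have : DiscreteTopology s :=
    discreteTopology_subtype_iff.2 fun x hx => inf_principal_eq_bot.2 (h x hx)
  (HereditarilyLindelofSpace.isLindelof s).countable this

section Slope

variable {g : ℝ → ℝ} {t a : ℝ}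

theorem eventually_nhdsGT_lt_of_tendsto_slope
    (hg : Tendsto (fun h => (g (t + h) - g t) / h) (𝓝[>] 0) (𝓝 a)) (ha : 0 < a) :
    ∀ᶠ s in 𝓝[>] t, g t < g s := by
  have hpos : ∀ᶠ h in 𝓝[>] 0, g t < g (t + h) := by
    filter_upwards [hg.eventually (eventually_gt_nhds ha), self_mem_nhdsWithin]
      with h hq (hh : 0 < h)
    exact sub_pos.1 ((div_pos_iff_of_pos_right hh).1 hq)
  simpa using (eventually_map (m := (t + ·)) (f := 𝓝[>] 0)).2 hpos

theorem eventually_nhdsLT_lt_of_tendsto_slope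
    (hg : Tendsto (fun h => (g (t + h) - g t) / h) (𝓝[<] 0) (𝓝 a)) (ha : a < 0) :
    ∀ᶠ s in 𝓝[<] t, g t < g s := by
  have hpos : ∀ᶠ h in 𝓝[<] 0, g t < g (t + h) := by
    filter_upwards [hg.eventually (eventually_lt_nhds ha), self_mem_nhdsWithin]
      with h hq (hh : h < 0)
    simpa using (div_lt_iff_of_neg hh).1 hq
  simpa using (eventually_map (m := (t + ·)) (f := 𝓝[<] 0)).2 hpos

end Slope

theorem Filter.Tendsto.slope_sub_of_eq {u v : ℝ → ℝ} {t a b : ℝ} {l : Filter ℝ} (heq : u t = v t)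
    (hu : Tendsto (fun h => (u (t + h) - u t) / h) l (𝓝 a))
    (hv : Tendsto (fun h => (v (t + h) - v t) / h) l (𝓝 b)) :
    Tendsto (fun h => ((v - u) (t + h) - (v - u) t) / h) l (𝓝 (b - a)) :=
  (hv.sub hu).congr fun h => by simp only [Pi.sub_apply, heq]; ring

theorem eventually_nhdsNE_lt_of_tendsto_slope {u v : ℝ → ℝ} {t a b c d : ℝ} (heq : u t = v t)
    (hu_right : Tendsto (fun h => (u (t + h) - u t) / h) (𝓝[>] 0) (𝓝 a))
    (hv_right : Tendsto (fun h => (v (t + h) - v t) / h) (𝓝[>] 0) (𝓝 b))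
    (hu_left : Tendsto (fun h => (u (t + h) - u t) / h) (𝓝[<] 0) (𝓝 c))
    (hv_left : Tendsto (fun h => (v (t + h) - v t) / h) (𝓝[<] 0) (𝓝 d))
    (hab : a < b) (hdc : d < c) :
    ∀ᶠ s in 𝓝[≠] t, u s < v s := by
  have hright := eventually_nhdsGT_lt_of_tendsto_slope (hu_right.slope_sub_of_eq heq hv_right)
    (sub_pos.2 hab)
  have hleft := eventually_nhdsLT_lt_of_tendsto_slope (hu_left.slope_sub_of_eq heq hv_left)
    (sub_neg.2 hdc)
  rw [← nhdsLT_sup_nhdsGT, eventually_sup]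
  exact ⟨hleft.mono fun s hs => by simpa [heq] using hs,
    hright.mono fun s hs => by simpa [heq] using hs⟩

namespace IsCluster

variable {f : ℕ → ℝ → ℝ} {m k n : ℕ} {t : ℝ}

theorem le_last (hc : IsCluster f m k n t) : k ≤ k + n - 1 := by
  have := hc.2.1
  omega

theorem last_eq (hc : IsCluster f m k n t) : f (k + n - 1) t = f k t :=
  hc.2.2.2.2.1 _ hc.le_last le_rfl

theorem eventually_nhdsNE_first_lt_last {dp dm : ℕ → ℝ → ℝ} (hc : IsCluster f m k n t)
    (hdp : ∀ j, 1 ≤ j → j ≤ m →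
      Tendsto (fun h => (f j (t + h) - f j t) / h) (𝓝[>] 0) (𝓝 (dp j t)))
    (hdm : ∀ j, 1 ≤ j → j ≤ m →
      Tendsto (fun h => (f j (t + h) - f j t) / h) (𝓝[<] 0) (𝓝 (dm j t)))
    (hcross : ∀ j, k ≤ j → j ≤ k + n - 1 → dp j t = dm (2 * k + n - j - 1) t)
    (hp : dp k t < dp (k + n - 1) t) :
    ∀ᶠ t' in 𝓝[≠] t, f k t' < f (k + n - 1) t' := by
  have hle := hc.le_last
  have heq := hc.last_eq
  obtain ⟨hk, -, hlast, -⟩ := hc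
  have hfirst_cross : dp k t = dm (k + n - 1) t := by
    simpa [show 2 * k + n - k - 1 = k + n - 1 by omega] using hcross k le_rfl hle
  have hlast_cross : dp (k + n - 1) t = dm k t := by
    simpa [show 2 * k + n - (k + n - 1) - 1 = k by omega] using hcross _ hle le_rfl
  exact eventually_nhdsNE_lt_of_tendsto_slope heq.symm
    (hdp k hk (by omega)) (hdp _ (by omega) hlast) (hdm k hk (by omega)) (hdm _ (by omega) hlast)
    hp (hfirst_cross ▸ hlast_cross ▸ hp)

end IsCluster

theorem hadamard_stmt10_general
    (m : ℕ) (f : ℕ → ℝ → ℝ)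
    (dp dm : ℕ → ℝ → ℝ)
    -- existence of the one-sided derivatives
    (hdp : ∀ j t, 1 ≤ j → j ≤ m →
      Filter.Tendsto (fun h : ℝ => (f j (t + h) - f j t) / h)
        (nhdsWithin 0 (Set.Ioi 0)) (nhds (dp j t)))
    (hdm : ∀ j t, 1 ≤ j → j ≤ m →
      Filter.Tendsto (fun h : ℝ => (f j (t + h) - f j t) / h)
        (nhdsWithin 0 (Set.Iio 0)) (nhds (dm j t)))
    -- crossing relation on every cluster
    (hcross : ∀ t k n, IsCluster f m k n t →
      ∀ j, k ≤ j → j ≤ k + n - 1 → dp j t = dm (2 * k + n - j - 1) t) :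
    (∀ t k n, IsCluster f m k n t → dp k t < dp (k + n - 1) t →
      ∀ᶠ t' in nhdsWithin t {t}ᶜ, f k t' < f (k + n - 1) t') ∧
    Set.Countable {t : ℝ | ∃ k n, IsCluster f m k n t ∧ dp k t < dp (k + n - 1) t} := by
  have hsep : ∀ t k n, IsCluster f m k n t → dp k t < dp (k + n - 1) t →
      ∀ᶠ t' in 𝓝[≠] t, f k t' < f (k + n - 1) t' := fun t k n hc hp =>
    hc.eventually_nhdsNE_first_lt_last (fun j => hdp j t) (fun j => hdm j t) (hcross t k n hc) hp
  refine ⟨hsep, ?_⟩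
  simp only [Set.ofPred_exists]
  refine Set.countable_iUnion fun k => Set.countable_iUnion fun n => ?_
  refine Set.Countable.of_forall_eventually_notMem fun t ⟨hc, hp⟩ => ?_
  filter_upwards [hsep t k n hc hp] with t' hlt ⟨hc', _⟩
  exact hlt.ne' hc'.last_eq

/-- at a point `t` where an `n`-cluster `K = {k, …, k+n−1}` has positive
`p`-value (`ḟ_k⁺(t) < ḟ_{k+n−1}⁺(t)`), the curves separate: `f_{k+n−1}(t') > f_k(t')`
for all `t' ≠ t` close to `t`; consequently the set of such points is at most
countable. -/
theorem hadamard_stmt10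
    (m : ℕ) (hm : 1 ≤ m) (f : ℕ → ℝ → ℝ)
    (hcont : ∀ j, 1 ≤ j → j ≤ m → Continuous (f j))
    (horder : ∀ t, ∀ j, 1 ≤ j → j + 1 ≤ m → f j t ≤ f (j + 1) t)
    (dp dm : ℕ → ℝ → ℝ)
    -- existence of the one-sided derivatives
    (hdp : ∀ j t, 1 ≤ j → j ≤ m →
      Filter.Tendsto (fun h : ℝ => (f j (t + h) - f j t) / h)
        (nhdsWithin 0 (Set.Ioi 0)) (nhds (dp j t)))
    (hdm : ∀ j t, 1 ≤ j → j ≤ m →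
      Filter.Tendsto (fun h : ℝ => (f j (t + h) - f j t) / h)
        (nhdsWithin 0 (Set.Iio 0)) (nhds (dm j t)))
    -- unilateral continuity of the one-sided derivatives
    (hdpcont : ∀ j t, 1 ≤ j → j ≤ m →
      Filter.Tendsto (fun h : ℝ => dp j (t + h)) (nhdsWithin 0 (Set.Ioi 0))
        (nhds (dp j t)))
    (hdmcont : ∀ j t, 1 ≤ j → j ≤ m →
      Filter.Tendsto (fun h : ℝ => dm j (t + h)) (nhdsWithin 0 (Set.Iio 0))
        (nhds (dm j t)))
    -- crossing relation on every cluster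
    (hcross : ∀ t k n, IsCluster f m k n t →
      ∀ j, k ≤ j → j ≤ k + n - 1 → dp j t = dm (2 * k + n - j - 1) t) :
    (∀ t k n, IsCluster f m k n t → dp k t < dp (k + n - 1) t →
      ∀ᶠ t' in nhdsWithin t {t}ᶜ, f k t' < f (k + n - 1) t') ∧
    Set.Countable {t : ℝ | ∃ k n, IsCluster f m k n t ∧ dp k t < dp (k + n - 1) t} :=
  hadamard_stmt10_general m f dp dm hdp hdm hcross
end

section
/- In the abstract setting, let λ be a multiple eigenvalue at t with eigenspace Y, let R : X → Y be the B_t-orthogonal projection and P = I − R, let C_t = A_t − λB_t, and let φ_j ∈ Y be strong V-limits of normalized eigenfunctions u_j(t+h_ℓ) along h_ℓ → 0 with first-derivative limits λ̇_j^*. Then z_ℓ^j = (u_j(t+h_ℓ) − φ_j)/h_ℓ satisfies lim_{ℓ→∞} C_t(z_ℓ^j, v) = −Ċ^{*j}_t(φ_j, v) for every v ∈ V, where Ċ^{*j}_t = Ȧ_t − λ̇_j^* B_t − λ Ḃ_t. -/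
/-!
Subtracting `C_t(φ_j, v) = 0` and inserting the eigenvalue equation at `t + h` gives the exact identity
`C_t(z_h, v) = ((λ_j(t+h) − λ)/h) B_{t+h}(u_h, v) + λ (B_{t+h} − B_t)(u_h, v)/h − (A_{t+h} − A_t)(u_h, v)/h`
with `u_h = u_j(t+h)`. The uniform Taylor expansions make the difference quotients of the forms converge
along the convergent sequence `u_h → φ_j`, and each term passes to the limit.
-/

open Filter Topology Asymptotics

section BilinearForm

variable {E F : Type*} [NormedAddCommGroup E] [NormedSpace ℝ E]
  [NormedAddCommGroup F] [NormedSpace ℝ F]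

theorem tendsto_apply_of_abs_le {B : E →ₗ[ℝ] F →ₗ[ℝ] ℝ} {C : ℝ}
    (hB : ∀ x y, |B x y| ≤ C * ‖x‖ * ‖y‖) {α : Type*} {l : Filter α}
    {x : α → E} {y : α → F} {x₀ : E} {y₀ : F}
    (hx : Tendsto x l (𝓝 x₀)) (hy : Tendsto y l (𝓝 y₀)) :
    Tendsto (fun n => B (x n) (y n)) l (𝓝 (B x₀ y₀)) :=
  ((B.mkContinuous₂ C fun x y => (Real.norm_eq_abs _).trans_le (hB x y)).continuous₂.tendsto
    (x₀, y₀)).comp (hx.prodMk_nhds hy)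

theorem abs_apply_le_of_abs_le_on_unit_balls {R : E →ₗ[ℝ] F →ₗ[ℝ] ℝ} {c : ℝ}
    (hR : ∀ u v, ‖u‖ ≤ 1 → ‖v‖ ≤ 1 → |R u v| ≤ c) (u : E) (v : F) :
    |R u v| ≤ c * ‖u‖ * ‖v‖ := by
  rcases eq_or_ne u 0 with rfl | hu
  · simp
  rcases eq_or_ne v 0 with rfl | hv
  · simp
  have hu' : 0 < ‖u‖ := norm_pos_iff.mpr hu
  have hv' : 0 < ‖v‖ := norm_pos_iff.mpr hv
  have hunit := hR (‖u‖⁻¹ • u) (‖v‖⁻¹ • v) (norm_smul_inv_norm hu).le (norm_smul_inv_norm hv).le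
  simp only [map_smul, LinearMap.smul_apply, smul_eq_mul, abs_mul, abs_inv, abs_norm] at hunit
  calc |R u v| = ‖u‖ * ‖v‖ * (‖v‖⁻¹ * (‖u‖⁻¹ * |R u v|)) := by field_simp
    _ ≤ ‖u‖ * ‖v‖ * c := by gcongr
    _ = c * ‖u‖ * ‖v‖ := by ring

def HasUniformTaylorDerivAt (B : ℝ → E →ₗ[ℝ] F →ₗ[ℝ] ℝ) (B' : E →ₗ[ℝ] F →ₗ[ℝ] ℝ) (t : ℝ) : Prop :=
  ∀ ε > (0:ℝ), ∃ η > (0:ℝ), ∀ h : ℝ, h ≠ 0 → |h| < η →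
    ∀ u v, ‖u‖ ≤ 1 → ‖v‖ ≤ 1 → |B (t + h) u v - B t u v - h * B' u v| ≤ ε * |h|

namespace HasUniformTaylorDerivAt

variable {B : ℝ → E →ₗ[ℝ] F →ₗ[ℝ] ℝ} {B' : E →ₗ[ℝ] F →ₗ[ℝ] ℝ} {t : ℝ}

theorem abs_diffQuot_sub_le (hB : HasUniformTaylorDerivAt B B' t) {ε : ℝ} (hε : 0 < ε) :
    ∃ η > (0:ℝ), ∀ h : ℝ, h ≠ 0 → |h| < η →
      ∀ u v, |(B (t + h) u v - B t u v) / h - B' u v| ≤ ε * ‖u‖ * ‖v‖ := by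
  obtain ⟨η, hη, hTaylor⟩ := hB ε hε
  refine ⟨η, hη, fun h h0 hη' u v => ?_⟩
  have hrem := abs_apply_le_of_abs_le_on_unit_balls (R := B (t + h) - B t - h • B')
    (fun u v hu hv => by simpa using hTaylor h h0 hη' u v hu hv) u v
  simp only [LinearMap.sub_apply, LinearMap.smul_apply, smul_eq_mul] at hrem
  have hquot : (B (t + h) u v - B t u v) / h - B' u v =
      (B (t + h) u v - B t u v - h * B' u v) / h := by
    field_simp
  rw [hquot, abs_div, div_le_iff₀ (abs_pos.mpr h0)]
  linarith

variable (hB : HasUniformTaylorDerivAt B B' t) {CB' : ℝ} (hB'bdd : ∀ u v, |B' u v| ≤ CB' * ‖u‖ * ‖v‖)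
  {α : Type*} {l : Filter α} {a : α → ℝ} (ha0 : ∀ n, a n ≠ 0) (ha : Tendsto a l (𝓝 0))
  {x : α → E} {x₀ : E} (hx : Tendsto x l (𝓝 x₀)) (y : F)
include hB hB'bdd ha0 ha hx

theorem tendsto_diffQuot :
    Tendsto (fun n => (B (t + a n) (x n) y - B t (x n) y) / a n) l (𝓝 (B' x₀ y)) := by
  have hsmall : (fun n => (B (t + a n) (x n) y - B t (x n) y) / a n - B' (x n) y)
      =o[l] fun n => ‖x n‖ * ‖y‖ := IsLittleO.of_bound fun ε hε => by
    obtain ⟨η, hη, hquot⟩ := hB.abs_diffQuot_sub_le hε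
    filter_upwards [ha (Metric.ball_mem_nhds 0 hη)] with n hn
    rw [Set.mem_preimage, mem_ball_zero_iff, Real.norm_eq_abs] at hn
    rw [Real.norm_eq_abs, norm_mul, norm_norm, norm_norm, ← mul_assoc]
    exact hquot _ (ha0 n) hn _ _
  have hzero := (isLittleO_one_iff ℝ).mp
    (hsmall.trans_isBigO ((hx.norm.mul_const _).isBigO_one ℝ))
  simpa using hzero.add (tendsto_apply_of_abs_le hB'bdd hx (tendsto_const_nhds (x := y)))

theorem tendsto_apply_add {CB : ℝ}
    (hBbdd : ∀ u v, |B t u v| ≤ CB * ‖u‖ * ‖v‖) :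
    Tendsto (fun n => B (t + a n) (x n) y) l (𝓝 (B t x₀ y)) := by
  have hlim := (ha.mul (hB.tendsto_diffQuot hB'bdd ha0 ha hx y)).add
    (tendsto_apply_of_abs_le hBbdd hx (tendsto_const_nhds (x := y)))
  rw [zero_mul, zero_add] at hlim
  refine hlim.congr fun n => ?_
  field_simp [ha0 n]
  ring

end HasUniformTaylorDerivAt

end BilinearForm

theorem hadamard_stmt12_general
    {V : Type*} [NormedAddCommGroup V] [InnerProductSpace ℝ V] [CompleteSpace V]
    {X : Type*} [NormedAddCommGroup X] [InnerProductSpace ℝ X] [CompleteSpace X]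
    (ι : V →L[ℝ] X)
    (A : ℝ → V →ₗ[ℝ] V →ₗ[ℝ] ℝ) (B : ℝ → X →ₗ[ℝ] X →ₗ[ℝ] ℝ)
    (CB : ℝ) (hBbdd : ∀ t', ∀ u v : X, |B t' u v| ≤ CB * ‖u‖ * ‖v‖)
    (t : ℝ)
    (A' : V →ₗ[ℝ] V →ₗ[ℝ] ℝ) (B' : X →ₗ[ℝ] X →ₗ[ℝ] ℝ)
    (CA' : ℝ) (hA'bdd : ∀ u v : V, |A' u v| ≤ CA' * ‖u‖ * ‖v‖)
    (CB' : ℝ) (hB'bdd : ∀ u v : X, |B' u v| ≤ CB' * ‖u‖ * ‖v‖)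
    (hAder : ∀ ε > (0:ℝ), ∃ η > (0:ℝ), ∀ h : ℝ, h ≠ 0 → |h| < η →
      ∀ u v : V, ‖u‖ ≤ 1 → ‖v‖ ≤ 1 →
        |A (t + h) u v - A t u v - h * A' u v| ≤ ε * |h|)
    (hBder : ∀ ε > (0:ℝ), ∃ η > (0:ℝ), ∀ h : ℝ, h ≠ 0 → |h| < η →
      ∀ u v : X, ‖u‖ ≤ 1 → ‖v‖ ≤ 1 →
        |B (t + h) u v - B t u v - h * B' u v| ≤ ε * |h|)
    (lam : ℕ → ℝ → ℝ) (u : ℕ → ℝ → V) (j : ℕ)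
    -- `u_j(t')` : `B_{t'}`-normalized eigenfunctions for `λ_j(t')`
    (heig : ∀ t', ∀ v : V, A t' (u j t') v = lam j t' * B t' (ι (u j t')) (ι v))
    (lambda : ℝ) (hlambda : lambda = lam j t)
    -- `Y` : the eigenspace of the multiple eigenvalue `λ` at `t`; `C_t` vanishes on `Y × V`
    (Y : Submodule ℝ V)
    (hCvanish : ∀ w ∈ Y, ∀ v : V, A t w v - lambda * B t (ι w) (ι v) = 0)
    -- sequence `h_ℓ → 0` along which `u_j(t+h_ℓ) → φ_j` strongly in `V`, `φ_j ∈ Y`,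
    -- and the first difference quotients of `λ_j` converge to `λ̇_j^*`
    (hseq : ℕ → ℝ) (hseq0 : ∀ ℓ, hseq ℓ ≠ 0)
    (hseqlim : Filter.Tendsto hseq Filter.atTop (nhds 0))
    (φ : V) (hφY : φ ∈ Y)
    (hφlim : Filter.Tendsto (fun ℓ => u j (t + hseq ℓ)) Filter.atTop (nhds φ))
    (lamdot : ℝ)
    (hlamdot : Filter.Tendsto (fun ℓ => (lam j (t + hseq ℓ) - lam j t) / hseq ℓ)
      Filter.atTop (nhds lamdot)) :
    ∀ v : V,
      Filter.Tendsto
        (fun ℓ =>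
          A t ((hseq ℓ)⁻¹ • (u j (t + hseq ℓ) - φ)) v -
            lambda * B t (ι ((hseq ℓ)⁻¹ • (u j (t + hseq ℓ) - φ))) (ι v))
        Filter.atTop
        (nhds (-(A' φ v - lamdot * B t (ι φ) (ι v) - lambda * B' (ι φ) (ι v)))) := by
  subst hlambda
  intro v
  have hιφ := (ι.continuous.tendsto φ).comp hφlim
  have hAquot := HasUniformTaylorDerivAt.tendsto_diffQuot hAder hA'bdd hseq0 hseqlim
    hφlim v
  have hBquot := HasUniformTaylorDerivAt.tendsto_diffQuot hBder hB'bdd hseq0 hseqlim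
    hιφ (ι v)
  have hBshift := HasUniformTaylorDerivAt.tendsto_apply_add hBder hB'bdd hseq0 hseqlim
    hιφ (ι v) (hBbdd t)
  have hlim := ((hlamdot.mul hBshift).add (hBquot.const_mul (lam j t))).sub hAquot
  rw [show lamdot * B t (ι φ) (ι v) + lam j t * B' (ι φ) (ι v) - A' φ v =
      -(A' φ v - lamdot * B t (ι φ) (ι v) - lam j t * B' (ι φ) (ι v)) by ring] at hlim
  refine hlim.congr fun ℓ => ?_
  simp only [Function.comp_apply, map_sub, map_smul, LinearMap.sub_apply, LinearMap.smul_apply,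
    smul_eq_mul]
  linear_combination (hseq ℓ)⁻¹ * hCvanish φ hφY v - (hseq ℓ)⁻¹ * heig (t + hseq ℓ) v

/-- with `C_t = A_t − λB_t` and
`Ċ_t^{*j} = Ȧ_t − λ̇_j^* B_t − λ Ḃ_t`, the difference quotients
`z_ℓ^j = (u_j(t+h_ℓ) − φ_j)/h_ℓ` satisfy
`C_t(z_ℓ^j, v) → −Ċ_t^{*j}(φ_j, v)` for every `v ∈ V`. -/
theorem hadamard_stmt12
    {V : Type*} [NormedAddCommGroup V] [InnerProductSpace ℝ V] [CompleteSpace V]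
    {X : Type*} [NormedAddCommGroup X] [InnerProductSpace ℝ X] [CompleteSpace X]
    (ι : V →L[ℝ] X) (hι : Function.Injective ι) (hcompact : IsCompactOperator ι)
    (A : ℝ → V →ₗ[ℝ] V →ₗ[ℝ] ℝ) (B : ℝ → X →ₗ[ℝ] X →ₗ[ℝ] ℝ)
    (hAsymm : ∀ t', ∀ u v : V, A t' u v = A t' v u)
    (hBsymm : ∀ t', ∀ u v : X, B t' u v = B t' v u)
    (CA : ℝ) (hAbdd : ∀ t', ∀ u v : V, |A t' u v| ≤ CA * ‖u‖ * ‖v‖)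
    (CB : ℝ) (hBbdd : ∀ t', ∀ u v : X, |B t' u v| ≤ CB * ‖u‖ * ‖v‖)
    (δ : ℝ) (hδ : 0 < δ)
    (hAcoer : ∀ t', ∀ v : V, δ * ‖v‖ ^ 2 ≤ A t' v v)
    (hBcoer : ∀ t', ∀ v : X, δ * ‖v‖ ^ 2 ≤ B t' v v)
    (t : ℝ)
    (A' : V →ₗ[ℝ] V →ₗ[ℝ] ℝ) (B' : X →ₗ[ℝ] X →ₗ[ℝ] ℝ)
    (CA' : ℝ) (hA'bdd : ∀ u v : V, |A' u v| ≤ CA' * ‖u‖ * ‖v‖)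
    (CB' : ℝ) (hB'bdd : ∀ u v : X, |B' u v| ≤ CB' * ‖u‖ * ‖v‖)
    (hAder : ∀ ε > (0:ℝ), ∃ η > (0:ℝ), ∀ h : ℝ, h ≠ 0 → |h| < η →
      ∀ u v : V, ‖u‖ ≤ 1 → ‖v‖ ≤ 1 →
        |A (t + h) u v - A t u v - h * A' u v| ≤ ε * |h|)
    (hBder : ∀ ε > (0:ℝ), ∃ η > (0:ℝ), ∀ h : ℝ, h ≠ 0 → |h| < η →
      ∀ u v : X, ‖u‖ ≤ 1 → ‖v‖ ≤ 1 →
        |B (t + h) u v - B t u v - h * B' u v| ≤ ε * |h|)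
    (lam : ℕ → ℝ → ℝ) (u : ℕ → ℝ → V) (j : ℕ)
    -- `u_j(t')` : `B_{t'}`-normalized eigenfunctions for `λ_j(t')`
    (hnorm : ∀ t', B t' (ι (u j t')) (ι (u j t')) = 1)
    (heig : ∀ t', ∀ v : V, A t' (u j t') v = lam j t' * B t' (ι (u j t')) (ι v))
    (lambda : ℝ) (hlambda : lambda = lam j t)
    -- `Y` : the eigenspace of the multiple eigenvalue `λ` at `t`; `C_t` vanishes on `Y × V`
    (Y : Submodule ℝ V)
    (hYeig : ∀ w : V, w ∈ Y ↔ ∀ v : V, A t w v = lambda * B t (ι w) (ι v))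
    (hCvanish : ∀ w ∈ Y, ∀ v : V, A t w v - lambda * B t (ι w) (ι v) = 0)
    -- sequence `h_ℓ → 0` along which `u_j(t+h_ℓ) → φ_j` strongly in `V`, `φ_j ∈ Y`,
    -- and the first difference quotients of `λ_j` converge to `λ̇_j^*`
    (hseq : ℕ → ℝ) (hseq0 : ∀ ℓ, hseq ℓ ≠ 0)
    (hseqlim : Filter.Tendsto hseq Filter.atTop (nhds 0))
    (φ : V) (hφY : φ ∈ Y)
    (hφlim : Filter.Tendsto (fun ℓ => u j (t + hseq ℓ)) Filter.atTop (nhds φ))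
    (lamdot : ℝ)
    (hlamdot : Filter.Tendsto (fun ℓ => (lam j (t + hseq ℓ) - lam j t) / hseq ℓ)
      Filter.atTop (nhds lamdot)) :
    ∀ v : V,
      Filter.Tendsto
        (fun ℓ =>
          A t ((hseq ℓ)⁻¹ • (u j (t + hseq ℓ) - φ)) v -
            lambda * B t (ι ((hseq ℓ)⁻¹ • (u j (t + hseq ℓ) - φ))) (ι v))
        Filter.atTop
        (nhds (-(A' φ v - lamdot * B t (ι φ) (ι v) - lambda * B' (ι φ) (ι v)))) :=
  hadamard_stmt12_general ι A B CB hBbdd t A' B' CA' hA'bdd CB' hB'bdd hAder hBder lam u j heig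
    lambda hlambda Y hCvanish hseq hseq0 hseqlim φ hφY hφlim lamdot hlamdot
end

section
/- Under the same setting, the projected difference quotients Pz_ℓ^j = P((u_j(t+h_ℓ) − φ_j)/h_ℓ) converge strongly in V, as ℓ → ∞, to the unique z_*^j ∈ PV satisfying C_t(z_*^j, v) = −Ċ^{*j}_t(φ_j, v) for all v ∈ PV; moreover this identity then holds for all v ∈ V. -/
/-!
Write `C = A_t − λ B_t(ι·, ι·)` as a map `V → V*`; its kernel is `Y`. A Gårding inequality
`δ‖v‖² ≤ C(v, v) + |λ| ‖B_t‖ ‖ι v‖²` together with compactness of `ι` makes a sequence of unit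
vectors of `PV` with `C v_n → 0` converge along a subsequence, to a unit vector of
`ker C ∩ PV = 0`; hence `C` is bounded below on `PV`. Subtracting the eigenvalue equations at
`t + h` and `t` shows that `C` applied to the difference quotient `z_h` converges in `V*` to
`−Ċ(φ, ·)`. Since `C z_h = C (P z_h)`, the lower bound makes `P z_h` Cauchy; its limit solves the
equation tested on `PV`, and on all of `V` because `C` is symmetric and vanishes on
`Y ∋ v − P v`. Uniqueness is the lower bound once more.
-/

open Filter Topology

section Derivatives

variable {E₁ E₂ F₁ F₂ W : Type*}
  [NormedAddCommGroup E₁] [NormedSpace ℝ E₁] [NormedAddCommGroup E₂] [NormedSpace ℝ E₂]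
  [NormedAddCommGroup F₁] [NormedSpace ℝ F₁] [NormedAddCommGroup F₂] [NormedSpace ℝ F₂]
  [NormedAddCommGroup W] [NormedSpace ℝ W]

theorem hasDerivAt_of_unit_norm_bound {f : ℝ → F₁ →L[ℝ] F₂ →L[ℝ] W}
    {f' : F₁ →L[ℝ] F₂ →L[ℝ] W} {t : ℝ}
    (hf : ∀ ε > (0 : ℝ), ∃ η > (0 : ℝ), ∀ h : ℝ, h ≠ 0 → |h| < η →
      ∀ (x : F₁) (y : F₂), ‖x‖ ≤ 1 → ‖y‖ ≤ 1 →
        ‖(f (t + h) x y : W) - f t x y - h • f' x y‖ ≤ ε * |h|) :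
    HasDerivAt f f' t := by
  refine (hasDerivAt_iff_isLittleO_nhds_zero (f := f) (f' := f') (x := t)).mpr
    (Asymptotics.isLittleO_iff.mpr fun ε hε => ?_)
  obtain ⟨η, hη, hbound⟩ := hf ε hε
  filter_upwards [Metric.ball_mem_nhds 0 hη] with h hh
  rw [Metric.mem_ball, dist_zero_right, Real.norm_eq_abs] at hh
  refine ContinuousLinearMap.opNorm_le_of_unit_norm (by positivity) fun x hx => ?_
  refine ContinuousLinearMap.opNorm_le_of_unit_norm (by positivity) fun y hy => ?_
  rcases eq_or_ne h 0 with rfl | h0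
  · simp
  simpa using hbound h h0 hh x y hx.le hy.le

theorem HasDerivAt.bilinearComp {f : ℝ → F₁ →L[ℝ] F₂ →L[ℝ] W} {f' : F₁ →L[ℝ] F₂ →L[ℝ] W}
    {t : ℝ} (hf : HasDerivAt f f' t) (g₁ : E₁ →L[ℝ] F₁) (g₂ : E₂ →L[ℝ] F₂) :
    HasDerivAt (fun s => (f s).bilinearComp g₁ g₂) (f'.bilinearComp g₁ g₂) t := by
  -- `L f = f.bilinearComp g₁ g₂`, written as pre- and post-composition to make it a CLM in `f`
  let L : (F₁ →L[ℝ] F₂ →L[ℝ] W) →L[ℝ] E₁ →L[ℝ] E₂ →L[ℝ] W :=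
    ContinuousLinearMap.compL ℝ E₁ (F₂ →L[ℝ] W) (E₂ →L[ℝ] W)
      ((ContinuousLinearMap.compL ℝ E₂ F₂ W).flip g₂) ∘L
    (ContinuousLinearMap.compL ℝ E₁ F₁ (F₂ →L[ℝ] W)).flip g₁
  refine (hasDerivAt_iff_tendsto_slope_zero (f := fun s => (f s).bilinearComp g₁ g₂)).mpr ?_
  replace hf := (hasDerivAt_iff_tendsto_slope_zero (f := f)).mp hf
  refine ((L.continuous.tendsto f').comp hf).congr fun s => ?_
  ext x y
  simp [L]

end Derivatives

section EigenQuotient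

variable {E F : Type*} [NormedAddCommGroup E] [NormedSpace ℝ E]
  [NormedAddCommGroup F] [NormedSpace ℝ F]

theorem tendsto_apply_diffQuot_of_eigen {α β : ℝ → E →L[ℝ] F} {α' β' : E →L[ℝ] F} {t : ℝ}
    (hα : HasDerivAt α α' t) (hβ : HasDerivAt β β' t) {μ : ℝ → ℝ} {y : ℝ → E}
    (heig : ∀ s, α s (y s) = μ s • β s (y s)) {h : ℕ → ℝ} (h0 : ∀ n, h n ≠ 0)
    (hlim : Tendsto h atTop (𝓝 0)) {φ : E} (hφ : (α t - μ t • β t) φ = 0)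
    (hy : Tendsto (fun n => y (t + h n)) atTop (𝓝 φ)) {μ' : ℝ}
    (hμ : Tendsto (fun n => (μ (t + h n) - μ t) / h n) atTop (𝓝 μ')) :
    Tendsto (fun n => (α t - μ t • β t) ((h n)⁻¹ • (y (t + h n) - φ))) atTop
      (𝓝 (-((α' - μ' • β t - μ t • β') φ))) := by
  have hh : Tendsto h atTop (𝓝[≠] 0) := tendsto_nhdsWithin_iff.mpr ⟨hlim, .of_forall h0⟩
  have hα' := hα.tendsto_slope_zero.comp hh
  have hβ' := hβ.tendsto_slope_zero.comp hh
  have hμ₀ : Tendsto (fun n => μ (t + h n)) atTop (𝓝 (μ t)) := by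
    have := (hμ.mul hlim).const_add (μ t)
    rw [mul_zero, add_zero] at this
    refine this.congr fun n => ?_
    rw [div_mul_cancel₀ _ (h0 n)]
    ring
  have hsplit : ∀ n, (α t - μ t • β t) ((h n)⁻¹ • (y (t + h n) - φ)) =
      -((h n)⁻¹ • (α (t + h n) - α t)) (y (t + h n))
        + μ (t + h n) • ((h n)⁻¹ • (β (t + h n) - β t)) (y (t + h n))
        + ((μ (t + h n) - μ t) / h n) • β t (y (t + h n)) := by
    intro n
    have hφ' : α t φ = μ t • β t φ := by simpa [sub_eq_zero] using hφ
    simp only [map_smul, map_sub, sub_apply, smul_apply, hφ', heig, div_eq_inv_mul, mul_smul]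
    module
  have happly : ∀ {T : ℕ → E →L[ℝ] F} {T₀ : E →L[ℝ] F} {x : ℕ → E} {x₀ : E},
      Tendsto T atTop (𝓝 T₀) → Tendsto x atTop (𝓝 x₀) →
        Tendsto (fun n => T n (x n)) atTop (𝓝 (T₀ x₀)) := fun hT hx =>
    (isBoundedBilinearMap_apply.continuous.tendsto _).comp (hT.prodMk_nhds hx)
  have hlimit : -α' φ + μ t • β' φ + μ' • β t φ = -((α' - μ' • β t - μ t • β') φ) := by
    simp only [sub_apply, smul_apply]
    module
  simp_rw [hsplit, ← hlimit]
  exact ((happly hα' hy).neg.add (hμ₀.smul (happly hβ' hy))).add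
    (hμ.smul (((β t).continuous.tendsto φ).comp hy))

end EigenQuotient

theorem exists_tendsto_of_mul_norm_le {V W : Type*} [NormedAddCommGroup V] [NormedSpace ℝ V]
    [CompleteSpace V] [NormedAddCommGroup W] [NormedSpace ℝ W] {T : V →L[ℝ] W}
    {S : Submodule ℝ V} (hS : IsClosed (S : Set V)) {c : ℝ} (hc : 0 < c)
    (hT : ∀ z ∈ S, c * ‖z‖ ≤ ‖T z‖) {z : ℕ → V} (hz : ∀ n, z n ∈ S) {F : W}
    (hTz : Tendsto (fun n => T (z n)) atTop (𝓝 F)) :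
    ∃ z₀ ∈ S, T z₀ = F ∧ Tendsto z atTop (𝓝 z₀) := by
  have hcauchy : CauchySeq z := by
    have hdist := cauchySeq_iff_tendsto_dist_atTop_0.mp hTz.cauchySeq
    refine cauchySeq_iff_tendsto_dist_atTop_0.mpr
      (squeeze_zero (fun _ => dist_nonneg) (fun p => ?_) (by simpa using hdist.const_mul c⁻¹))
    rw [dist_eq_norm, dist_eq_norm, ← map_sub, le_inv_mul_iff₀ hc]
    exact hT _ (S.sub_mem (hz _) (hz _))
  obtain ⟨z₀, hz₀⟩ := cauchySeq_tendsto_of_complete hcauchy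
  exact ⟨z₀, hS.mem_of_tendsto hz₀ (.of_forall hz),
    tendsto_nhds_unique ((T.continuous.tendsto _).comp hz₀) hTz, hz₀⟩

section Garding

variable {V X : Type*} [NormedAddCommGroup V] [NormedSpace ℝ V]
  [NormedAddCommGroup X] [NormedSpace ℝ X] {ι : V →L[ℝ] X} {G : V →L[ℝ] V →L[ℝ] ℝ} {δ C : ℝ}

theorem cauchySeq_of_garding (hδ : 0 < δ) (hG : ∀ v, δ * ‖v‖ ^ 2 ≤ G v v + C * ‖ι v‖ ^ 2)
    {w : ℕ → V} (hw : ∀ n, ‖w n‖ ≤ 1) (hGw : Tendsto (fun n => G (w n)) atTop (𝓝 0))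
    (hιw : CauchySeq fun n => ι (w n)) : CauchySeq w := by
  rw [cauchySeq_iff_tendsto_dist_atTop_0] at hιw ⊢
  have hGw' : Tendsto (fun n => ‖G (w n)‖) atTop (𝓝 0) := by simpa using hGw.norm
  have hbound : ∀ m n, dist (w m) (w n) ^ 2 ≤
      δ⁻¹ * (2 * (‖G (w m)‖ + ‖G (w n)‖) + |C| * dist (ι (w m)) (ι (w n)) ^ 2) := by
    intro m n
    set d := w m - w n
    have hd : ‖d‖ ≤ 2 := (norm_sub_le _ _).trans (by linarith [hw m, hw n])
    have hGd : G d d ≤ 2 * (‖G (w m)‖ + ‖G (w n)‖) := by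
      have h1 := le_of_abs_le ((G (w m)).le_opNorm d)
      have h2 := neg_le_of_abs_le ((G (w n)).le_opNorm d)
      calc G d d = G (w m) d - G (w n) d := by simp [d]
        _ ≤ (‖G (w m)‖ + ‖G (w n)‖) * ‖d‖ := by linarith
        _ ≤ (‖G (w m)‖ + ‖G (w n)‖) * 2 := by gcongr
        _ = 2 * (‖G (w m)‖ + ‖G (w n)‖) := mul_comm _ _
    have hCd : C * ‖ι d‖ ^ 2 ≤ |C| * dist (ι (w m)) (ι (w n)) ^ 2 := by
      rw [dist_eq_norm, ← map_sub]
      exact mul_le_mul_of_nonneg_right (le_abs_self C) (by positivity)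
    rw [dist_eq_norm, le_inv_mul_iff₀ hδ]
    linarith [hG d]
  have hsq : Tendsto (fun p : ℕ × ℕ => dist (w p.1) (w p.2) ^ 2) atTop (𝓝 0) := by
    refine squeeze_zero (fun _ => by positivity) (fun p => hbound p.1 p.2) ?_
    rw [← prod_atTop_atTop_eq] at hιw ⊢
    simpa using ((((hGw'.comp tendsto_fst).add (hGw'.comp tendsto_snd)).const_mul 2).add
      ((hιw.pow 2).const_mul |C|)).const_mul δ⁻¹
  simpa [Real.sqrt_sq dist_nonneg] using hsq.sqrt

theorem exists_pos_mul_norm_le_of_garding [CompleteSpace V] (hcompact : IsCompactOperator ι)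
    (hδ : 0 < δ) (hG : ∀ v, δ * ‖v‖ ^ 2 ≤ G v v + C * ‖ι v‖ ^ 2) {S : Submodule ℝ V}
    (hS : IsClosed (S : Set V)) (hker : ∀ w ∈ S, G w = 0 → w = 0) :
    ∃ c > 0, ∀ z ∈ S, c * ‖z‖ ≤ ‖G z‖ := by
  by_contra! hcon
  have hseq : ∀ n : ℕ, ∃ w ∈ S, ‖w‖ = 1 ∧ ‖G w‖ ≤ 1 / ((n : ℝ) + 1) := by
    intro n
    obtain ⟨z, hzS, hz⟩ := hcon (1 / ((n : ℝ) + 1)) (by positivity)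
    have hz0 : z ≠ 0 := by rintro rfl; simp at hz
    refine ⟨‖z‖⁻¹ • z, S.smul_mem _ hzS, norm_smul_inv_norm hz0, ?_⟩
    rw [map_smul, norm_smul, norm_inv, norm_norm, inv_mul_le_iff₀ (norm_pos_iff.mpr hz0)]
    linarith
  choose w hwS hw1 hGw using hseq
  have hGw0 : Tendsto (fun n => G (w n)) atTop (𝓝 0) :=
    squeeze_zero_norm hGw tendsto_one_div_add_atTop_nhds_zero_nat
  obtain ⟨x, -, ψ, hψ, hx⟩ := (hcompact.isCompact_closure_image_closedBall 1).tendsto_subseq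
    (x := fun n => ι (w n)) fun n => subset_closure ⟨w n, by simp [hw1], rfl⟩
  have hGwψ := hGw0.comp hψ.tendsto_atTop
  obtain ⟨w₀, hlim⟩ := cauchySeq_tendsto_of_complete
    (cauchySeq_of_garding hδ hG (fun n => (hw1 (ψ n)).le) hGwψ hx.cauchySeq)
  have hw₀S : w₀ ∈ S := hS.mem_of_tendsto hlim (.of_forall fun n => hwS _)
  have hw₀1 : ‖w₀‖ = 1 := tendsto_nhds_unique hlim.norm (by simp [hw1])
  have hGw₀ : G w₀ = 0 := tendsto_nhds_unique ((G.continuous.tendsto _).comp hlim) hGwψ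
  simp [hker _ hw₀S hGw₀] at hw₀1

theorem garding_sub_smul_bilinearComp {a : V →L[ℝ] V →L[ℝ] ℝ} (ha : ∀ v, δ * ‖v‖ ^ 2 ≤ a v v)
    (b : X →L[ℝ] X →L[ℝ] ℝ) (μ : ℝ) (v : V) :
    δ * ‖v‖ ^ 2 ≤ (a - μ • b.bilinearComp ι ι) v v + |μ| * ‖b‖ * ‖ι v‖ ^ 2 := by
  have hb : |b (ι v) (ι v)| ≤ ‖b‖ * ‖ι v‖ * ‖ι v‖ := b.le_opNorm₂ _ _
  have hμb : μ * b (ι v) (ι v) ≤ |μ| * (‖b‖ * ‖ι v‖ * ‖ι v‖) :=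
    (le_abs_self _).trans (abs_mul μ _ ▸ mul_le_mul_of_nonneg_left hb (abs_nonneg μ))
  simp only [sub_apply, smul_apply, ContinuousLinearMap.bilinearComp_apply, smul_eq_mul]
  nlinarith [ha v]

theorem exists_tendsto_proj_of_garding [CompleteSpace V] (hcompact : IsCompactOperator ι)
    (hδ : 0 < δ) (hG : ∀ v, δ * ‖v‖ ^ 2 ≤ G v v + C * ‖ι v‖ ^ 2)
    (hsymm : ∀ u v, G u v = G v u) {Y : Submodule ℝ V} (hker : ∀ w, w ∈ Y ↔ G w = 0)
    {P : V →L[ℝ] V} (hPP : ∀ v, P (P v) = P v) (hPY : ∀ v, v - P v ∈ Y)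
    (hPY0 : ∀ y ∈ Y, P y = 0) {z : ℕ → V} {F : V →L[ℝ] ℝ}
    (hGz : Tendsto (fun n => G (z n)) atTop (𝓝 F)) :
    ∃ z₀, P z₀ = z₀ ∧ G z₀ = F ∧ Tendsto (fun n => P (z n)) atTop (𝓝 z₀) ∧
      ∀ z', P z' = z' → (∀ v, P v = v → G z' v = F v) → z' = z₀ := by
  let S : Submodule ℝ V := LinearMap.eqLocus (P : V →ₗ[ℝ] V) LinearMap.id
  have hS : IsClosed (S : Set V) := isClosed_eq P.continuous continuous_id
  have hGP : ∀ v, G (P v) = G v := fun v => by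
    rw [← sub_eq_zero, ← map_sub, ← neg_eq_zero, ← map_neg, neg_sub]
    exact (hker _).mp (hPY v)
  have hkerS : ∀ w ∈ S, G w = 0 → w = 0 := fun w (hw : P w = w) h => by
    rw [← hw, hPY0 _ ((hker w).mpr h)]
  obtain ⟨c, hc, hest⟩ := exists_pos_mul_norm_le_of_garding hcompact hδ hG hS hkerS
  obtain ⟨z₀, hz₀S, hGz₀, hlim⟩ := exists_tendsto_of_mul_norm_le hS hc hest
    (z := fun n => P (z n)) (fun n => hPP (z n)) (by simpa only [hGP] using hGz)
  refine ⟨z₀, hz₀S, hGz₀, hlim, fun z' hz' hF => ?_⟩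
  have hGz' : G (z' - z₀) = 0 := by
    ext v
    have hP : G (z' - z₀) (P v) = 0 := by
      rw [map_sub, sub_apply, hF _ (hPP v), hGz₀, sub_self]
    have hY : G (z' - z₀) (v - P v) = 0 := by
      rw [hsymm, (hker _).mp (hPY v), zero_apply]
    rw [← add_sub_cancel (P v) v, map_add, hP, hY, add_zero, zero_apply]
  exact sub_eq_zero.mp (hkerS _ (S.sub_mem hz' hz₀S) hGz')

end Garding

section Projection

variable {V X : Type*} [AddCommGroup V] [Module ℝ V] [AddCommGroup X] [Module ℝ X]
  {b : X →ₗ[ℝ] X →ₗ[ℝ] ℝ} {ι : V →ₗ[ℝ] X} {Y : Submodule ℝ V} {P : V →ₗ[ℝ] V}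

theorem map_eq_zero_of_mem_of_orthProj (hb : ∀ v, b (ι v) (ι v) = 0 → v = 0)
    (hPY : ∀ v, v - P v ∈ Y) (hPorth : ∀ v, ∀ y ∈ Y, b (ι (P v)) (ι y) = 0) {y : V}
    (hy : y ∈ Y) : P y = 0 :=
  hb _ (hPorth y _ (by simpa using Y.sub_mem hy (hPY y)))

theorem map_map_eq_of_orthProj (hb : ∀ v, b (ι v) (ι v) = 0 → v = 0)
    (hPY : ∀ v, v - P v ∈ Y) (hPorth : ∀ v, ∀ y ∈ Y, b (ι (P v)) (ι y) = 0) (v : V) :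
    P (P v) = P v := by
  have hw : P v - P (P v) ∈ Y := hPY (P v)
  refine (sub_eq_zero.mp (hb _ ?_)).symm
  calc b (ι (P v - P (P v))) (ι (P v - P (P v)))
      = b (ι (P v)) (ι (P v - P (P v))) - b (ι (P (P v))) (ι (P v - P (P v))) := by
        simp only [map_sub, LinearMap.sub_apply]; ring
    _ = 0 := by rw [hPorth v _ hw, hPorth (P v) _ hw, sub_zero]

end Projection

theorem hadamard_stmt13_general
    {V : Type*} [NormedAddCommGroup V] [InnerProductSpace ℝ V] [CompleteSpace V]
    {X : Type*} [NormedAddCommGroup X] [InnerProductSpace ℝ X]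
    (ι : V →L[ℝ] X) (hι : Function.Injective ι) (hcompact : IsCompactOperator ι)
    (A : ℝ → V →ₗ[ℝ] V →ₗ[ℝ] ℝ) (B : ℝ → X →ₗ[ℝ] X →ₗ[ℝ] ℝ)
    (hAsymm : ∀ t', ∀ u v : V, A t' u v = A t' v u)
    (hBsymm : ∀ t', ∀ u v : X, B t' u v = B t' v u)
    (CA : ℝ) (hAbdd : ∀ t', ∀ u v : V, |A t' u v| ≤ CA * ‖u‖ * ‖v‖)
    (CB : ℝ) (hBbdd : ∀ t', ∀ u v : X, |B t' u v| ≤ CB * ‖u‖ * ‖v‖)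
    (δ : ℝ) (hδ : 0 < δ)
    (hAcoer : ∀ t', ∀ v : V, δ * ‖v‖ ^ 2 ≤ A t' v v)
    (hBcoer : ∀ t', ∀ v : X, δ * ‖v‖ ^ 2 ≤ B t' v v)
    (t : ℝ)
    (A' : V →ₗ[ℝ] V →ₗ[ℝ] ℝ) (B' : X →ₗ[ℝ] X →ₗ[ℝ] ℝ)
    (CA' : ℝ) (hA'bdd : ∀ u v : V, |A' u v| ≤ CA' * ‖u‖ * ‖v‖)
    (CB' : ℝ) (hB'bdd : ∀ u v : X, |B' u v| ≤ CB' * ‖u‖ * ‖v‖)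
    (hAder : ∀ ε > (0:ℝ), ∃ η > (0:ℝ), ∀ h : ℝ, h ≠ 0 → |h| < η →
      ∀ u v : V, ‖u‖ ≤ 1 → ‖v‖ ≤ 1 →
        |A (t + h) u v - A t u v - h * A' u v| ≤ ε * |h|)
    (hBder : ∀ ε > (0:ℝ), ∃ η > (0:ℝ), ∀ h : ℝ, h ≠ 0 → |h| < η →
      ∀ u v : X, ‖u‖ ≤ 1 → ‖v‖ ≤ 1 →
        |B (t + h) u v - B t u v - h * B' u v| ≤ ε * |h|)
    (lam : ℕ → ℝ → ℝ) (u : ℕ → ℝ → V) (j : ℕ)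
    (heig : ∀ t', ∀ v : V, A t' (u j t') v = lam j t' * B t' (ι (u j t')) (ι v))
    (lambda : ℝ) (hlambda : lambda = lam j t)
    (Y : Submodule ℝ V)
    (hYeig : ∀ w : V, w ∈ Y ↔ ∀ v : V, A t w v = lambda * B t (ι w) (ι v))
    -- `P = I − R`, `R` the `B_t`-orthogonal projection onto `Y`
    (P : V →L[ℝ] V)
    (hPY : ∀ v : V, v - P v ∈ Y)
    (hPorth : ∀ v : V, ∀ y ∈ Y, B t (ι (P v)) (ι y) = 0)
    (hseq : ℕ → ℝ) (hseq0 : ∀ ℓ, hseq ℓ ≠ 0)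
    (hseqlim : Filter.Tendsto hseq Filter.atTop (nhds 0))
    (φ : V) (hφY : φ ∈ Y)
    (hφlim : Filter.Tendsto (fun ℓ => u j (t + hseq ℓ)) Filter.atTop (nhds φ))
    (lamdot : ℝ)
    (hlamdot : Filter.Tendsto (fun ℓ => (lam j (t + hseq ℓ) - lam j t) / hseq ℓ)
      Filter.atTop (nhds lamdot)) :
    ∃ zstar : V,
      P zstar = zstar ∧
      (∀ v : V, P v = v →
        A t zstar v - lambda * B t (ι zstar) (ι v) =
          -(A' φ v - lamdot * B t (ι φ) (ι v) - lambda * B' (ι φ) (ι v))) ∧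
      (∀ z' : V, P z' = z' →
        (∀ v : V, P v = v →
          A t z' v - lambda * B t (ι z') (ι v) =
            -(A' φ v - lamdot * B t (ι φ) (ι v) - lambda * B' (ι φ) (ι v))) →
        z' = zstar) ∧
      Filter.Tendsto (fun ℓ => P ((hseq ℓ)⁻¹ • (u j (t + hseq ℓ) - φ)))
        Filter.atTop (nhds zstar) ∧
      (∀ v : V,
        A t zstar v - lambda * B t (ι zstar) (ι v) =
          -(A' φ v - lamdot * B t (ι φ) (ι v) - lambda * B' (ι φ) (ι v))) := by
  subst hlambda
  let a : ℝ → V →L[ℝ] V →L[ℝ] ℝ := fun s => (A s).mkContinuous₂ CA (hAbdd s)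
  let b : ℝ → X →L[ℝ] X →L[ℝ] ℝ := fun s => (B s).mkContinuous₂ CB (hBbdd s)
  let β : ℝ → V →L[ℝ] V →L[ℝ] ℝ := fun s => (b s).bilinearComp ι ι
  have ha : HasDerivAt a (A'.mkContinuous₂ CA' hA'bdd) t :=
    hasDerivAt_of_unit_norm_bound (by simpa [a] using hAder)
  have hβ : HasDerivAt β ((B'.mkContinuous₂ CB' hB'bdd).bilinearComp ι ι) t :=
    (hasDerivAt_of_unit_norm_bound (by simpa [b] using hBder)).bilinearComp ι ι
  set G := a t - lam j t • β t
  have hker : ∀ w, w ∈ Y ↔ G w = 0 := fun w => by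
    simp [hYeig, ContinuousLinearMap.ext_iff, G, a, β, b, sub_eq_zero]
  have hBdef : ∀ v, B t (ι v) (ι v) = 0 → v = 0 := fun v hv => by
    have : ‖ι v‖ ^ 2 ≤ 0 := by nlinarith [hBcoer t (ι v)]
    exact hι (by simpa using this)
  have hPP : ∀ v, P (P v) = P v :=
    map_map_eq_of_orthProj (P := (P : V →ₗ[ℝ] V)) hBdef hPY hPorth
  have hPY0 : ∀ y ∈ Y, P y = 0 := fun y hy =>
    map_eq_zero_of_mem_of_orthProj (P := (P : V →ₗ[ℝ] V)) hBdef hPY hPorth hy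
  have hconv := tendsto_apply_diffQuot_of_eigen ha hβ (μ := lam j) (y := u j)
    (fun s => by ext v; simp [a, β, b, heig]) hseq0 hseqlim ((hker φ).mp hφY) hφlim hlamdot
  obtain ⟨z₀, hPz₀, hGz₀, hlim, huniq⟩ := exists_tendsto_proj_of_garding hcompact hδ
    (garding_sub_smul_bilinearComp (fun v => hAcoer t v) (b t) (lam j t))
    (fun u v => by simp [a, b, hAsymm t u v, hBsymm t (ι u)]) hker hPP hPY hPY0 hconv
  have hid : ∀ v, A t z₀ v - lam j t * B t (ι z₀) (ι v) =
      -(A' φ v - lamdot * B t (ι φ) (ι v) - lam j t * B' (ι φ) (ι v)) := fun v => by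
    simpa [G, a, β, b] using congr($hGz₀ v)
  refine ⟨z₀, hPz₀, fun v _ => hid v, fun z' hz' h => huniq z' hz' fun v hv => ?_, hlim, hid⟩
  simpa [G, a, β, b] using h v hv

/-- the projected difference quotients `P z_ℓ^j` converge strongly in `V`
to the unique `z_*^j ∈ PV` with `C_t(z_*^j, v) = −Ċ_t^{*j}(φ_j, v)` for all `v ∈ PV`;
moreover this identity then holds for every `v ∈ V`. -/
theorem hadamard_stmt13
    {V : Type*} [NormedAddCommGroup V] [InnerProductSpace ℝ V] [CompleteSpace V]
    {X : Type*} [NormedAddCommGroup X] [InnerProductSpace ℝ X] [CompleteSpace X]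
    (ι : V →L[ℝ] X) (hι : Function.Injective ι) (hcompact : IsCompactOperator ι)
    (A : ℝ → V →ₗ[ℝ] V →ₗ[ℝ] ℝ) (B : ℝ → X →ₗ[ℝ] X →ₗ[ℝ] ℝ)
    (hAsymm : ∀ t', ∀ u v : V, A t' u v = A t' v u)
    (hBsymm : ∀ t', ∀ u v : X, B t' u v = B t' v u)
    (CA : ℝ) (hAbdd : ∀ t', ∀ u v : V, |A t' u v| ≤ CA * ‖u‖ * ‖v‖)
    (CB : ℝ) (hBbdd : ∀ t', ∀ u v : X, |B t' u v| ≤ CB * ‖u‖ * ‖v‖)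
    (δ : ℝ) (hδ : 0 < δ)
    (hAcoer : ∀ t', ∀ v : V, δ * ‖v‖ ^ 2 ≤ A t' v v)
    (hBcoer : ∀ t', ∀ v : X, δ * ‖v‖ ^ 2 ≤ B t' v v)
    (t : ℝ)
    (A' : V →ₗ[ℝ] V →ₗ[ℝ] ℝ) (B' : X →ₗ[ℝ] X →ₗ[ℝ] ℝ)
    (CA' : ℝ) (hA'bdd : ∀ u v : V, |A' u v| ≤ CA' * ‖u‖ * ‖v‖)
    (CB' : ℝ) (hB'bdd : ∀ u v : X, |B' u v| ≤ CB' * ‖u‖ * ‖v‖)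
    (hAder : ∀ ε > (0:ℝ), ∃ η > (0:ℝ), ∀ h : ℝ, h ≠ 0 → |h| < η →
      ∀ u v : V, ‖u‖ ≤ 1 → ‖v‖ ≤ 1 →
        |A (t + h) u v - A t u v - h * A' u v| ≤ ε * |h|)
    (hBder : ∀ ε > (0:ℝ), ∃ η > (0:ℝ), ∀ h : ℝ, h ≠ 0 → |h| < η →
      ∀ u v : X, ‖u‖ ≤ 1 → ‖v‖ ≤ 1 →
        |B (t + h) u v - B t u v - h * B' u v| ≤ ε * |h|)
    (lam : ℕ → ℝ → ℝ) (u : ℕ → ℝ → V) (j : ℕ)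
    (hnorm : ∀ t', B t' (ι (u j t')) (ι (u j t')) = 1)
    (heig : ∀ t', ∀ v : V, A t' (u j t') v = lam j t' * B t' (ι (u j t')) (ι v))
    (lambda : ℝ) (hlambda : lambda = lam j t)
    (Y : Submodule ℝ V)
    (hYeig : ∀ w : V, w ∈ Y ↔ ∀ v : V, A t w v = lambda * B t (ι w) (ι v))
    (hCvanish : ∀ w ∈ Y, ∀ v : V, A t w v - lambda * B t (ι w) (ι v) = 0)
    -- `P = I − R`, `R` the `B_t`-orthogonal projection onto `Y`
    (P : V →L[ℝ] V)
    (hPY : ∀ v : V, v - P v ∈ Y)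
    (hPorth : ∀ v : V, ∀ y ∈ Y, B t (ι (P v)) (ι y) = 0)
    (hseq : ℕ → ℝ) (hseq0 : ∀ ℓ, hseq ℓ ≠ 0)
    (hseqlim : Filter.Tendsto hseq Filter.atTop (nhds 0))
    (φ : V) (hφY : φ ∈ Y)
    (hφlim : Filter.Tendsto (fun ℓ => u j (t + hseq ℓ)) Filter.atTop (nhds φ))
    (lamdot : ℝ)
    (hlamdot : Filter.Tendsto (fun ℓ => (lam j (t + hseq ℓ) - lam j t) / hseq ℓ)
      Filter.atTop (nhds lamdot)) :
    ∃ zstar : V,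
      P zstar = zstar ∧
      (∀ v : V, P v = v →
        A t zstar v - lambda * B t (ι zstar) (ι v) =
          -(A' φ v - lamdot * B t (ι φ) (ι v) - lambda * B' (ι φ) (ι v))) ∧
      (∀ z' : V, P z' = z' →
        (∀ v : V, P v = v →
          A t z' v - lambda * B t (ι z') (ι v) =
            -(A' φ v - lamdot * B t (ι φ) (ι v) - lambda * B' (ι φ) (ι v))) →
        z' = zstar) ∧
      Filter.Tendsto (fun ℓ => P ((hseq ℓ)⁻¹ • (u j (t + hseq ℓ) - φ)))
        Filter.atTop (nhds zstar) ∧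
      (∀ v : V,
        A t zstar v - lambda * B t (ι zstar) (ι v) =
          -(A' φ v - lamdot * B t (ι φ) (ι v) - lambda * B' (ι φ) (ι v))) :=
  hadamard_stmt13_general ι hι hcompact A B hAsymm hBsymm CA hAbdd CB hBbdd δ hδ hAcoer hBcoer t A'
    B' CA' hA'bdd CB' hB'bdd hAder hBder lam u j heig lambda hlambda Y hYeig P hPY hPorth hseq hseq0
    hseqlim φ hφY hφlim lamdot hlamdot
end

section
/- Under second-order differentiability of the forms (existence of bounded Ä_t, B̈_t with uniform second-order Taylor expansions of A_{t+h}, B_{t+h}), the second difference quotient of the eigenvalue converges: (2/h_ℓ²)(λ_j(t+h_ℓ) − λ_j(t) − h_ℓ λ̇_j^*) → λ̈_j^* with λ̈_j^* = (Ä_t − λ B̈_t − 2λ̇_j^* Ḃ_t)(φ_j, φ_j) − 2 C_t(z_*^j, z_*^j). -/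
/-!
Subtract the eigenvalue equations at `t` and `t + h`, both tested against `φ`, and expand the
forms to second order in `h`. By the corrector equation tested against `u(t + h)` itself, the
first-order term `Ċ(φ, u(t + h))` equals `-C_t(u(t + h), z)`, and `C_t(u(t + h), z) / h` tends to
`C_t(z, z)` by the eigenvalue equation at `t + h` tested against `z` and a first-order expansion.
The Taylor remainders are `o(h²)` uniformly on bounded sets, and all remaining terms converge by
continuity of the forms.
-/

open Filter Topology

section Bilinear

variable {E F : Type*} [NormedAddCommGroup E] [NormedSpace ℝ E]
  [NormedAddCommGroup F] [NormedSpace ℝ F]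

theorem LinearMap.continuous_uncurry_of_bound (Φ : E →ₗ[ℝ] F →ₗ[ℝ] ℝ) (C : ℝ)
    (hΦ : ∀ u v, |Φ u v| ≤ C * ‖u‖ * ‖v‖) : Continuous fun p : E × F => Φ p.1 p.2 :=
  (Φ.mkContinuous₂ C hΦ).continuous₂

theorem LinearMap.continuous_uncurry_compl₁₂_of_bound {E' F' : Type*} [NormedAddCommGroup E']
    [NormedSpace ℝ E'] [NormedAddCommGroup F'] [NormedSpace ℝ F'] (Φ : E →ₗ[ℝ] F →ₗ[ℝ] ℝ)
    (C : ℝ) (hΦ : ∀ u v, |Φ u v| ≤ C * ‖u‖ * ‖v‖) (ι : E' →L[ℝ] E) (κ : F' →L[ℝ] F) :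
    Continuous fun p : E' × F' => Φ.compl₁₂ (ι : E' →ₗ[ℝ] E) (κ : F' →ₗ[ℝ] F) p.1 p.2 :=
  (Φ.continuous_uncurry_of_bound C hΦ).comp (ι.continuous.prodMap κ.continuous)

theorem LinearMap.abs_apply_le_of_unit_ball (Φ : E →ₗ[ℝ] F →ₗ[ℝ] ℝ) (c : ℝ)
    (hΦ : ∀ u v, ‖u‖ ≤ 1 → ‖v‖ ≤ 1 → |Φ u v| ≤ c) (u : E) (v : F) :
    |Φ u v| ≤ c * ‖u‖ * ‖v‖ := by
  rcases eq_or_ne u 0 with rfl | hu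
  · simp
  rcases eq_or_ne v 0 with rfl | hv
  · simp
  have hu' : 0 < ‖u‖ := norm_pos_iff.2 hu
  have hv' : 0 < ‖v‖ := norm_pos_iff.2 hv
  have h := hΦ (‖u‖⁻¹ • u) (‖v‖⁻¹ • v) (by simp [norm_smul, hu'.ne'])
    (by simp [norm_smul, hv'.ne'])
  simp only [map_smul, LinearMap.smul_apply, smul_eq_mul, abs_mul, abs_inv, abs_norm] at h
  calc |Φ u v| = ‖u‖ * ‖v‖ * (‖v‖⁻¹ * (‖u‖⁻¹ * |Φ u v|)) := by field_simp
    _ ≤ ‖u‖ * ‖v‖ * c := by gcongr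
    _ = c * ‖u‖ * ‖v‖ := by ring

theorem tendsto_bilin_apply {Φ : E →ₗ[ℝ] F →ₗ[ℝ] ℝ}
    (hΦ : Continuous fun p : E × F => Φ p.1 p.2) {α : Type*} {l : Filter α} {a : α → E}
    {b : α → F} {a₀ : E} {b₀ : F} (ha : Tendsto a l (𝓝 a₀)) (hb : Tendsto b l (𝓝 b₀)) :
    Tendsto (fun i => Φ (a i) (b i)) l (𝓝 (Φ a₀ b₀)) :=
  (hΦ.tendsto (a₀, b₀)).comp (ha.prodMk_nhds hb)

noncomputable def taylorRemainder₂ (G : ℝ → E →ₗ[ℝ] F →ₗ[ℝ] ℝ) (t : ℝ) (G₁ G₂ : E →ₗ[ℝ] F →ₗ[ℝ] ℝ)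
    (h : ℝ) (u : E) (v : F) : ℝ :=
  G (t + h) u v - G t u v - h * G₁ u v - h ^ 2 / 2 * G₂ u v

def HasUniformTaylor₂At (G : ℝ → E →ₗ[ℝ] F →ₗ[ℝ] ℝ) (t : ℝ) (G₁ G₂ : E →ₗ[ℝ] F →ₗ[ℝ] ℝ) :
    Prop :=
  ∀ ε > 0, ∀ᶠ h in 𝓝 (0 : ℝ), ∀ u v,
    |taylorRemainder₂ G t G₁ G₂ h u v| ≤ ε * h ^ 2 * ‖u‖ * ‖v‖

variable {G : ℝ → E →ₗ[ℝ] F →ₗ[ℝ] ℝ} {t : ℝ} {G₁ G₂ : E →ₗ[ℝ] F →ₗ[ℝ] ℝ}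

@[simp]
theorem taylorRemainder₂_zero (u : E) (v : F) : taylorRemainder₂ G t G₁ G₂ 0 u v = 0 := by
  simp [taylorRemainder₂]

theorem hasUniformTaylor₂At_of_unit_ball
    (hG : ∀ ε > (0 : ℝ), ∃ η > (0 : ℝ), ∀ h : ℝ, h ≠ 0 → |h| < η →
      ∀ u v, ‖u‖ ≤ 1 → ‖v‖ ≤ 1 → |taylorRemainder₂ G t G₁ G₂ h u v| ≤ ε * h ^ 2) :
    HasUniformTaylor₂At G t G₁ G₂ := by
  intro ε hε
  obtain ⟨η, hη, hGη⟩ := hG ε hε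
  filter_upwards [Metric.ball_mem_nhds 0 hη] with h hh u v
  rcases eq_or_ne h 0 with rfl | h0
  · simp
  rw [mem_ball_zero_iff, Real.norm_eq_abs] at hh
  let R : E →ₗ[ℝ] F →ₗ[ℝ] ℝ := G (t + h) - G t - h • G₁ - (h ^ 2 / 2) • G₂
  exact R.abs_apply_le_of_unit_ball _ (hGη h h0 hh) u v

theorem HasUniformTaylor₂At.compl₁₂ {E' F' : Type*} [NormedAddCommGroup E'] [NormedSpace ℝ E']
    [NormedAddCommGroup F'] [NormedSpace ℝ F'] (hG : HasUniformTaylor₂At G t G₁ G₂)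
    (ι : E' →L[ℝ] E) (κ : F' →L[ℝ] F) :
    HasUniformTaylor₂At (fun s => (G s).compl₁₂ (ι : E' →ₗ[ℝ] E) (κ : F' →ₗ[ℝ] F)) t
      (G₁.compl₁₂ (ι : E' →ₗ[ℝ] E) κ) (G₂.compl₁₂ (ι : E' →ₗ[ℝ] E) κ) := by
  intro ε hε
  have hM : 0 < ‖ι‖ * ‖κ‖ + 1 := by positivity
  filter_upwards [hG (ε / (‖ι‖ * ‖κ‖ + 1)) (by positivity)] with h hh u v
  calc |taylorRemainder₂ G t G₁ G₂ h (ι u) (κ v)|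
      ≤ ε / (‖ι‖ * ‖κ‖ + 1) * h ^ 2 * ‖ι u‖ * ‖κ v‖ := hh _ _
    _ ≤ ε / (‖ι‖ * ‖κ‖ + 1) * h ^ 2 * (‖ι‖ * ‖u‖) * (‖κ‖ * ‖v‖) := by
        gcongr
        exacts [ι.le_opNorm u, κ.le_opNorm v]
    _ = ε * ((‖ι‖ * ‖κ‖) / (‖ι‖ * ‖κ‖ + 1)) * h ^ 2 * ‖u‖ * ‖v‖ := by ring
    _ ≤ ε * 1 * h ^ 2 * ‖u‖ * ‖v‖ := by
        gcongr
        exact (div_le_one hM).2 (lt_add_one _).le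
    _ = ε * h ^ 2 * ‖u‖ * ‖v‖ := by ring

theorem HasUniformTaylor₂At.tendsto_remainder_div_sq (hG : HasUniformTaylor₂At G t G₁ G₂)
    {α : Type*} {l : Filter α} {h : α → ℝ} (hh : Tendsto h l (𝓝 0))
    {a : α → E} {b : α → F} {a₀ : E} {b₀ : F} (ha : Tendsto a l (𝓝 a₀))
    (hb : Tendsto b l (𝓝 b₀)) :
    Tendsto (fun i => taylorRemainder₂ G t G₁ G₂ (h i) (a i) (b i) / h i ^ 2) l (𝓝 0) := by
  rw [Metric.tendsto_nhds]
  intro ε hε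
  filter_upwards [hh.eventually (hG (ε / (2 * ((‖a₀‖ + 1) * (‖b₀‖ + 1)))) (by positivity)),
    ha.norm.eventually_le_const (lt_add_one _), hb.norm.eventually_le_const (lt_add_one _)]
    with i hi hai hbi
  rw [Real.dist_0_eq_abs, abs_div, abs_pow, sq_abs]
  rcases eq_or_ne (h i) 0 with h0 | h0
  · simpa [h0] using hε
  rw [div_lt_iff₀ (by positivity)]
  calc |taylorRemainder₂ G t G₁ G₂ (h i) (a i) (b i)|
      ≤ ε / (2 * ((‖a₀‖ + 1) * (‖b₀‖ + 1))) * h i ^ 2 * ‖a i‖ * ‖b i‖ := hi _ _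
    _ ≤ ε / (2 * ((‖a₀‖ + 1) * (‖b₀‖ + 1))) * h i ^ 2 * (‖a₀‖ + 1) * (‖b₀‖ + 1) := by gcongr
    _ = ε / 2 * h i ^ 2 := by field_simp
    _ < ε * h i ^ 2 := by linarith [mul_pos hε (by positivity : 0 < h i ^ 2)]

theorem HasUniformTaylor₂At.tendsto_div (hG : HasUniformTaylor₂At G t G₁ G₂)
    (hG₁ : Continuous fun p : E × F => G₁ p.1 p.2) (hG₂ : Continuous fun p : E × F => G₂ p.1 p.2)
    {α : Type*} {l : Filter α} {h : α → ℝ} (hh : Tendsto h l (𝓝 0)) (hh0 : ∀ᶠ i in l, h i ≠ 0)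
    {a : α → E} {b : α → F} {a₀ : E} {b₀ : F} (ha : Tendsto a l (𝓝 a₀))
    (hb : Tendsto b l (𝓝 b₀)) :
    Tendsto (fun i => (G (t + h i) (a i) (b i) - G t (a i) (b i)) / h i) l
      (𝓝 (G₁ a₀ b₀)) := by
  have hlim := ((tendsto_bilin_apply hG₁ ha hb).add ((hh.div_const 2).mul
    (tendsto_bilin_apply hG₂ ha hb))).add (hh.mul (hG.tendsto_remainder_div_sq hh ha hb))
  simp only [zero_div, zero_mul, add_zero] at hlim
  refine hlim.congr' ?_
  filter_upwards [hh0] with i hi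
  simp only [taylorRemainder₂]
  field_simp
  ring

end Bilinear

theorem tendsto_of_tendsto_sub_div {α : Type*} {l : Filter α} {h μ : α → ℝ} {c d : ℝ}
    (hh : Tendsto h l (𝓝 0)) (hh0 : ∀ᶠ i in l, h i ≠ 0)
    (hμ : Tendsto (fun i => (μ i - c) / h i) l (𝓝 d)) : Tendsto μ l (𝓝 c) := by
  have hlim := (hμ.mul hh).const_add c
  rw [mul_zero, add_zero] at hlim
  refine hlim.congr' ?_
  filter_upwards [hh0] with i hi
  field_simp
  ring

section Eigenvalue

variable {V : Type*} [NormedAddCommGroup V] [NormedSpace ℝ V]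
  {A B : ℝ → V →ₗ[ℝ] V →ₗ[ℝ] ℝ} {t : ℝ} {A' B' A'' B'' : V →ₗ[ℝ] V →ₗ[ℝ] ℝ}
  {α : Type*} {l : Filter α} {h μ : α → ℝ} {u : α → V} {lam lamdot : ℝ} {φ : V}

theorem tendsto_eigenResidual_div (hA : HasUniformTaylor₂At A t A' A'')
    (hB : HasUniformTaylor₂At B t B' B'') (hBt : Continuous fun p : V × V => B t p.1 p.2)
    (hA' : Continuous fun p : V × V => A' p.1 p.2) (hB' : Continuous fun p : V × V => B' p.1 p.2)
    (hA'' : Continuous fun p : V × V => A'' p.1 p.2)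
    (hB'' : Continuous fun p : V × V => B'' p.1 p.2)
    (hh : Tendsto h l (𝓝 0)) (hh0 : ∀ᶠ i in l, h i ≠ 0)
    (heig : ∀ i v, A (t + h i) (u i) v = μ i * B (t + h i) (u i) v)
    (hu : Tendsto u l (𝓝 φ)) (hμ : Tendsto (fun i => (μ i - lam) / h i) l (𝓝 lamdot))
    (v : V) :
    Tendsto (fun i => (A t (u i) v - lam * B t (u i) v) / h i) l
      (𝓝 (-(A' φ v - lamdot * B t φ v - lam * B' φ v))) := by
  have hquotA := hA.tendsto_div hA' hA'' hh hh0 hu (tendsto_const_nhds (x := v))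
  have hquotB := hB.tendsto_div hB' hB'' hh hh0 hu (tendsto_const_nhds (x := v))
  have hBu := tendsto_bilin_apply hBt hu (tendsto_const_nhds (x := v))
  have hlim := (hquotA.neg.add ((tendsto_of_tendsto_sub_div hh hh0 hμ).mul hquotB)).add
    (hμ.mul hBu)
  rw [show -(A' φ v - lamdot * B t φ v - lam * B' φ v)
    = -A' φ v + lam * B' φ v + lamdot * B t φ v by ring]
  refine hlim.congr' ?_
  filter_upwards [hh0] with i hi
  field_simp
  linear_combination -heig i v

theorem tendsto_second_difference_quotient_eigenvalue
    (hAsymm : ∀ s u v, A s u v = A s v u) (hBsymm : ∀ s u v, B s u v = B s v u)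
    (hA : HasUniformTaylor₂At A t A' A'')
    (hB : HasUniformTaylor₂At B t B' B'') (hBt : Continuous fun p : V × V => B t p.1 p.2)
    (hA' : Continuous fun p : V × V => A' p.1 p.2) (hB' : Continuous fun p : V × V => B' p.1 p.2)
    (hA'' : Continuous fun p : V × V => A'' p.1 p.2)
    (hB'' : Continuous fun p : V × V => B'' p.1 p.2)
    (hh : Tendsto h l (𝓝 0)) (hh0 : ∀ᶠ i in l, h i ≠ 0)
    (heig : ∀ i v, A (t + h i) (u i) v = μ i * B (t + h i) (u i) v)
    (hφ : ∀ v, A t φ v = lam * B t φ v) (hφB : B t φ φ = 1)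
    (hu : Tendsto u l (𝓝 φ)) (hμ : Tendsto (fun i => (μ i - lam) / h i) l (𝓝 lamdot))
    {z : V} (hz : ∀ v, A t z v - lam * B t z v = -(A' φ v - lamdot * B t φ v - lam * B' φ v)) :
    Tendsto (fun i => 2 / h i ^ 2 * (μ i - lam - h i * lamdot)) l
      (𝓝 (A'' φ φ - lam * B'' φ φ - 2 * lamdot * B' φ φ - 2 * (A t z z - lam * B t z z))) := by
  have hres := tendsto_eigenResidual_div hA hB hBt hA' hB' hA'' hB'' hh hh0 heig hu hμ z
  rw [← hz z] at hres
  have hφ' : Tendsto (fun _ => φ) l (𝓝 φ) := tendsto_const_nhds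
  have hμ₀ := tendsto_of_tendsto_sub_div hh hh0 hμ
  have hrA := hA.tendsto_remainder_div_sq hh hφ' hu
  have hrB := hB.tendsto_remainder_div_sq hh hφ' hu
  have hlim := ((((hres.const_mul (-2)).sub
    ((hμ.const_mul 2).mul (tendsto_bilin_apply hB' hφ' hu))).add
    ((tendsto_bilin_apply hA'' hφ' hu).sub
      (hμ₀.mul (tendsto_bilin_apply hB'' hφ' hu)))).add
    (hrA.const_mul 2)).sub ((hμ₀.const_mul 2).mul hrB)
  have hBu : Tendsto (fun i => B t φ (u i)) l (𝓝 1) :=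
    hφB ▸ tendsto_bilin_apply hBt hφ' hu
  have hexpansion : ∀ᶠ i in l, -2 * ((A t (u i) z - lam * B t (u i) z) / h i)
      - 2 * ((μ i - lam) / h i) * B' φ (u i) + (A'' φ (u i) - μ i * B'' φ (u i))
      + 2 * (taylorRemainder₂ A t A' A'' (h i) φ (u i) / h i ^ 2)
      - 2 * μ i * (taylorRemainder₂ B t B' B'' (h i) φ (u i) / h i ^ 2)
      = 2 / h i ^ 2 * (μ i - lam - h i * lamdot) * B t φ (u i) := by
    filter_upwards [hh0] with i hi
    have heigφ := heig i φ
    rw [hAsymm, hBsymm (t + h i)] at heigφ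
    have hzu := hz (u i)
    rw [hAsymm t z, hBsymm t z] at hzu
    simp only [taylorRemainder₂]
    field_simp
    linear_combination 2 * heigφ - 2 * hφ (u i) - 2 * h i * hzu
  convert ((hlim.congr' hexpansion).div hBu one_ne_zero).congr' ?_ using 2
  · ring
  · filter_upwards [hBu.eventually_ne one_ne_zero] with i hi
    exact mul_div_cancel_right₀ _ hi

end Eigenvalue

theorem hadamard_stmt14_general
    {V : Type*} [NormedAddCommGroup V] [InnerProductSpace ℝ V]
    {X : Type*} [NormedAddCommGroup X] [InnerProductSpace ℝ X]
    (ι : V →L[ℝ] X)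
    (A : ℝ → V →ₗ[ℝ] V →ₗ[ℝ] ℝ) (B : ℝ → X →ₗ[ℝ] X →ₗ[ℝ] ℝ)
    (hAsymm : ∀ t', ∀ u v : V, A t' u v = A t' v u)
    (hBsymm : ∀ t', ∀ u v : X, B t' u v = B t' v u)
    (CB : ℝ) (hBbdd : ∀ t', ∀ u v : X, |B t' u v| ≤ CB * ‖u‖ * ‖v‖)
    (t : ℝ)
    -- first derivatives `Ȧ_t`, `Ḃ_t`
    (A' : V →ₗ[ℝ] V →ₗ[ℝ] ℝ) (B' : X →ₗ[ℝ] X →ₗ[ℝ] ℝ)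
    (CA' : ℝ) (hA'bdd : ∀ u v : V, |A' u v| ≤ CA' * ‖u‖ * ‖v‖)
    (CB' : ℝ) (hB'bdd : ∀ u v : X, |B' u v| ≤ CB' * ‖u‖ * ‖v‖)
    -- second derivatives `Ä_t`, `B̈_t`
    (A'' : V →ₗ[ℝ] V →ₗ[ℝ] ℝ) (B'' : X →ₗ[ℝ] X →ₗ[ℝ] ℝ)
    (CA'' : ℝ) (hA''bdd : ∀ u v : V, |A'' u v| ≤ CA'' * ‖u‖ * ‖v‖)
    (CB'' : ℝ) (hB''bdd : ∀ u v : X, |B'' u v| ≤ CB'' * ‖u‖ * ‖v‖)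
    -- uniform second-order Taylor expansions
    (hAder2 : ∀ ε > (0:ℝ), ∃ η > (0:ℝ), ∀ h : ℝ, h ≠ 0 → |h| < η →
      ∀ u v : V, ‖u‖ ≤ 1 → ‖v‖ ≤ 1 →
        |A (t + h) u v - A t u v - h * A' u v - h ^ 2 / 2 * A'' u v| ≤ ε * h ^ 2)
    (hBder2 : ∀ ε > (0:ℝ), ∃ η > (0:ℝ), ∀ h : ℝ, h ≠ 0 → |h| < η →
      ∀ u v : X, ‖u‖ ≤ 1 → ‖v‖ ≤ 1 →
        |B (t + h) u v - B t u v - h * B' u v - h ^ 2 / 2 * B'' u v| ≤ ε * h ^ 2)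
    (lam : ℕ → ℝ → ℝ) (u : ℕ → ℝ → V) (j : ℕ)
    (heig : ∀ t', ∀ v : V, A t' (u j t') v = lam j t' * B t' (ι (u j t')) (ι v))
    (lambda : ℝ) (hlambda : lambda = lam j t)
    (Y : Submodule ℝ V)
    (hYeig : ∀ w : V, w ∈ Y ↔ ∀ v : V, A t w v = lambda * B t (ι w) (ι v))
    (hseq : ℕ → ℝ) (hseq0 : ∀ ℓ, hseq ℓ ≠ 0)
    (hseqlim : Filter.Tendsto hseq Filter.atTop (nhds 0))
    (φ : V) (hφY : φ ∈ Y) (hφnorm : B t (ι φ) (ι φ) = 1)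
    (hφlim : Filter.Tendsto (fun ℓ => u j (t + hseq ℓ)) Filter.atTop (nhds φ))
    (lamdot : ℝ)
    (hlamdot : Filter.Tendsto (fun ℓ => (lam j (t + hseq ℓ) - lam j t) / hseq ℓ)
      Filter.atTop (nhds lamdot))
    -- the corrector `z_*^j ∈ PV` solving `C_t(z_*^j, v) = −Ċ_t^{*j}(φ_j, v)` on `V`
    (zstar : V)
    (hz : ∀ v : V,
      A t zstar v - lambda * B t (ι zstar) (ι v) =
        -(A' φ v - lamdot * B t (ι φ) (ι v) - lambda * B' (ι φ) (ι v))) :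
    Filter.Tendsto
      (fun ℓ => 2 / (hseq ℓ) ^ 2 * (lam j (t + hseq ℓ) - lam j t - hseq ℓ * lamdot))
      Filter.atTop
      (nhds (A'' φ φ - lambda * B'' (ι φ) (ι φ) - 2 * lamdot * B' (ι φ) (ι φ) -
        2 * (A t zstar zstar - lambda * B t (ι zstar) (ι zstar)))) := by
  subst hlambda
  exact tendsto_second_difference_quotient_eigenvalue
    (B := fun s => (B s).compl₁₂ (ι : V →ₗ[ℝ] X) (ι : V →ₗ[ℝ] X))
    hAsymm (fun s x y => hBsymm s (ι x) (ι y)) (hasUniformTaylor₂At_of_unit_ball hAder2)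
    ((hasUniformTaylor₂At_of_unit_ball hBder2).compl₁₂ ι ι)
    ((B t).continuous_uncurry_compl₁₂_of_bound CB (hBbdd t) ι ι)
    (A'.continuous_uncurry_of_bound CA' hA'bdd)
    (B'.continuous_uncurry_compl₁₂_of_bound CB' hB'bdd ι ι)
    (A''.continuous_uncurry_of_bound CA'' hA''bdd)
    (B''.continuous_uncurry_compl₁₂_of_bound CB'' hB''bdd ι ι)
    hseqlim (.of_forall hseq0) (fun ℓ => heig _) ((hYeig φ).1 hφY) hφnorm hφlim hlamdot hz

/-- under second-order differentiability of the forms, the second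
difference quotients of the eigenvalue converge:
`(2/h_ℓ²)(λ_j(t+h_ℓ) − λ_j(t) − h_ℓ λ̇_j^*) → λ̈_j^*` with
`λ̈_j^* = (Ä_t − λ B̈_t − 2λ̇_j^* Ḃ_t)(φ_j, φ_j) − 2 C_t(z_*^j, z_*^j)`. -/
theorem hadamard_stmt14
    {V : Type*} [NormedAddCommGroup V] [InnerProductSpace ℝ V] [CompleteSpace V]
    {X : Type*} [NormedAddCommGroup X] [InnerProductSpace ℝ X] [CompleteSpace X]
    (ι : V →L[ℝ] X) (hι : Function.Injective ι) (hcompact : IsCompactOperator ι)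
    (A : ℝ → V →ₗ[ℝ] V →ₗ[ℝ] ℝ) (B : ℝ → X →ₗ[ℝ] X →ₗ[ℝ] ℝ)
    (hAsymm : ∀ t', ∀ u v : V, A t' u v = A t' v u)
    (hBsymm : ∀ t', ∀ u v : X, B t' u v = B t' v u)
    (CA : ℝ) (hAbdd : ∀ t', ∀ u v : V, |A t' u v| ≤ CA * ‖u‖ * ‖v‖)
    (CB : ℝ) (hBbdd : ∀ t', ∀ u v : X, |B t' u v| ≤ CB * ‖u‖ * ‖v‖)
    (δ : ℝ) (hδ : 0 < δ)
    (hAcoer : ∀ t', ∀ v : V, δ * ‖v‖ ^ 2 ≤ A t' v v)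
    (hBcoer : ∀ t', ∀ v : X, δ * ‖v‖ ^ 2 ≤ B t' v v)
    (t : ℝ)
    -- first derivatives `Ȧ_t`, `Ḃ_t`
    (A' : V →ₗ[ℝ] V →ₗ[ℝ] ℝ) (B' : X →ₗ[ℝ] X →ₗ[ℝ] ℝ)
    (CA' : ℝ) (hA'bdd : ∀ u v : V, |A' u v| ≤ CA' * ‖u‖ * ‖v‖)
    (CB' : ℝ) (hB'bdd : ∀ u v : X, |B' u v| ≤ CB' * ‖u‖ * ‖v‖)
    -- second derivatives `Ä_t`, `B̈_t`
    (A'' : V →ₗ[ℝ] V →ₗ[ℝ] ℝ) (B'' : X →ₗ[ℝ] X →ₗ[ℝ] ℝ)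
    (CA'' : ℝ) (hA''bdd : ∀ u v : V, |A'' u v| ≤ CA'' * ‖u‖ * ‖v‖)
    (CB'' : ℝ) (hB''bdd : ∀ u v : X, |B'' u v| ≤ CB'' * ‖u‖ * ‖v‖)
    -- uniform second-order Taylor expansions
    (hAder2 : ∀ ε > (0:ℝ), ∃ η > (0:ℝ), ∀ h : ℝ, h ≠ 0 → |h| < η →
      ∀ u v : V, ‖u‖ ≤ 1 → ‖v‖ ≤ 1 →
        |A (t + h) u v - A t u v - h * A' u v - h ^ 2 / 2 * A'' u v| ≤ ε * h ^ 2)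
    (hBder2 : ∀ ε > (0:ℝ), ∃ η > (0:ℝ), ∀ h : ℝ, h ≠ 0 → |h| < η →
      ∀ u v : X, ‖u‖ ≤ 1 → ‖v‖ ≤ 1 →
        |B (t + h) u v - B t u v - h * B' u v - h ^ 2 / 2 * B'' u v| ≤ ε * h ^ 2)
    (lam : ℕ → ℝ → ℝ) (u : ℕ → ℝ → V) (j : ℕ)
    (hnorm : ∀ t', B t' (ι (u j t')) (ι (u j t')) = 1)
    (heig : ∀ t', ∀ v : V, A t' (u j t') v = lam j t' * B t' (ι (u j t')) (ι v))
    (lambda : ℝ) (hlambda : lambda = lam j t)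
    (Y : Submodule ℝ V)
    (hYeig : ∀ w : V, w ∈ Y ↔ ∀ v : V, A t w v = lambda * B t (ι w) (ι v))
    (P : V →L[ℝ] V)
    (hPY : ∀ v : V, v - P v ∈ Y)
    (hPorth : ∀ v : V, ∀ y ∈ Y, B t (ι (P v)) (ι y) = 0)
    (hseq : ℕ → ℝ) (hseq0 : ∀ ℓ, hseq ℓ ≠ 0)
    (hseqlim : Filter.Tendsto hseq Filter.atTop (nhds 0))
    (φ : V) (hφY : φ ∈ Y) (hφnorm : B t (ι φ) (ι φ) = 1)
    (hφlim : Filter.Tendsto (fun ℓ => u j (t + hseq ℓ)) Filter.atTop (nhds φ))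
    (lamdot : ℝ)
    (hlamdot : Filter.Tendsto (fun ℓ => (lam j (t + hseq ℓ) - lam j t) / hseq ℓ)
      Filter.atTop (nhds lamdot))
    -- the corrector `z_*^j ∈ PV` solving `C_t(z_*^j, v) = −Ċ_t^{*j}(φ_j, v)` on `V`
    (zstar : V) (hzP : P zstar = zstar)
    (hz : ∀ v : V,
      A t zstar v - lambda * B t (ι zstar) (ι v) =
        -(A' φ v - lamdot * B t (ι φ) (ι v) - lambda * B' (ι φ) (ι v))) :
    Filter.Tendsto
      (fun ℓ => 2 / (hseq ℓ) ^ 2 * (lam j (t + hseq ℓ) - lam j t - hseq ℓ * lamdot))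
      Filter.atTop
      (nhds (A'' φ φ - lambda * B'' (ι φ) (ι φ) - 2 * lamdot * B' (ι φ) (ι φ) -
        2 * (A t zstar zstar - lambda * B t (ι zstar) (ι zstar)))) :=
  hadamard_stmt14_general ι A B hAsymm hBsymm CB hBbdd t A' B' CA' hA'bdd CB' hB'bdd A'' B'' CA''
    hA''bdd CB'' hB''bdd hAder2 hBder2 lam u j heig lambda hlambda Y hYeig hseq hseq0 hseqlim φ hφY
    hφnorm hφlim lamdot hlamdot zstar hz
end

section
/- Let g : I → ℝ be a function on an open interval such that for each t ∈ I there exist g'(t) and g''(t) with g(t+h) = g(t) + h g'(t) + (h²/2) g''(t) + o(h²) locally uniformly in t, and g'' is continuous. Then g' is differentiable with derivative g'': lim_{h→0} (g'(t+h) − g'(t))/h = g''(t), so g ∈ C². -/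
/-- if `g` admits a locally uniform second-order Taylor expansion on an
open interval `I` with coefficient functions `g'`, `g''`, and `g''` is continuous on
`I`, then `g'` is differentiable with derivative `g''`, so `g ∈ C²`. -/
theorem hadamard_stmt18
    (a b : ℝ) (g g' g'' : ℝ → ℝ)
    (htaylor : ∀ t ∈ Set.Ioo a b, ∀ ε > (0:ℝ), ∃ η > (0:ℝ),
      ∀ s ∈ Set.Ioo a b, |s - t| < η → ∀ h : ℝ, |h| < η → s + h ∈ Set.Ioo a b →
        |g (s + h) - g s - h * g' s - h ^ 2 / 2 * g'' s| ≤ ε * h ^ 2)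
    (hcont : ContinuousOn g'' (Set.Ioo a b)) :
    ∀ t ∈ Set.Ioo a b,
      Filter.Tendsto (fun h : ℝ => (g' (t + h) - g' t) / h)
        (nhdsWithin 0 {h : ℝ | h ≠ 0 ∧ t + h ∈ Set.Ioo a b})
        (nhds (g'' t)) := by
  intro t ht
  rw [Metric.tendsto_nhdsWithin_nhds]
  intro ε hε
  obtain ⟨η, hη, hT⟩ := htaylor t ht (ε / 12) (by positivity)
  have hc : ContinuousWithinAt g'' (Set.Ioo a b) t := hcont t ht
  rw [Metric.continuousWithinAt_iff] at hc
  obtain ⟨δ₂, hδ₂, hc⟩ := hc (ε / 4) (by positivity)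
  have hra : 0 < t - a := by linarith [ht.1]
  have hrb : 0 < b - t := by linarith [ht.2]
  refine ⟨min (min (η / 2) δ₂) (min ((t - a) / 2) ((b - t) / 2)), by positivity, ?_⟩
  rintro h ⟨hh0, hhI⟩ hd
  rw [Real.dist_eq, sub_zero] at hd
  have hhη : |h| < η := lt_of_lt_of_le hd (le_trans (min_le_left _ _)
    (le_trans (min_le_left _ _) (by linarith)))
  have hh2η : |2 * h| < η := by
    rw [abs_mul]
    have : |h| < η / 2 := lt_of_lt_of_le hd (le_trans (min_le_left _ _) (min_le_left _ _))
    simp only [abs_two]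
    linarith
  have hhδ₂ : |h| < δ₂ := lt_of_lt_of_le hd (le_trans (min_le_left _ _) (min_le_right _ _))
  have hha : |h| < (t - a) / 2 := lt_of_lt_of_le hd (le_trans (min_le_right _ _) (min_le_left _ _))
  have hhb : |h| < (b - t) / 2 := lt_of_lt_of_le hd (le_trans (min_le_right _ _) (min_le_right _ _))
  have habs := abs_lt.1 (lt_of_lt_of_le hd le_rfl)
  have h2I : t + 2 * h ∈ Set.Ioo a b := by
    constructor
    · nlinarith [neg_abs_le h, le_abs_self h]
    · nlinarith [neg_abs_le h, le_abs_self h]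
  have hst : |t - t| < η := by simpa using hη
  have he3 := hT t ht hst h hhη hhI
  have he2 := hT t ht hst (2 * h) hh2η h2I
  have hsth : |t + h - t| < η := by simpa using hhη
  have h2I' : t + h + h ∈ Set.Ioo a b := by
    have : t + h + h = t + 2 * h := by ring
    rw [this]; exact h2I
  have he1 := hT (t + h) hhI hsth h hhη h2I'
  have hcb : |g'' (t + h) - g'' t| < ε / 4 := by
    have := hc hhI (by rw [Real.dist_eq]; simpa using hhδ₂)
    rwa [Real.dist_eq] at this
  -- key identity and bound
  have hh2pos : (0:ℝ) < h ^ 2 := by positivity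
  rw [Real.dist_eq]
  set X := (g' (t + h) - g' t) / h - g'' t with hX
  have hid : h ^ 2 * X =
      (g (t + 2 * h) - g t - 2 * h * g' t - (2 * h) ^ 2 / 2 * g'' t)
      - (g (t + h) - g t - h * g' t - h ^ 2 / 2 * g'' t)
      - (g (t + h + h) - g (t + h) - h * g' (t + h) - h ^ 2 / 2 * g'' (t + h))
      + h ^ 2 / 2 * (g'' t - g'' (t + h)) := by
    have h2h : t + h + h = t + 2 * h := by ring
    rw [h2h, hX]
    field_simp
    ring
  have hbound : |h ^ 2 * X| < ε * h ^ 2 := by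
    rw [hid]
    have h1 : |h ^ 2 / 2 * (g'' t - g'' (t + h))| ≤ h ^ 2 / 2 * (ε / 4) := by
      rw [abs_mul]
      have : |h ^ 2 / 2| = h ^ 2 / 2 := abs_of_nonneg (by positivity)
      rw [this]
      rw [abs_sub_comm] at hcb
      exact mul_le_mul_of_nonneg_left hcb.le (by positivity)
    have h4 : ε / 12 * (2 * h) ^ 2 = ε / 3 * h ^ 2 := by ring
    rw [h4] at he2
    calc |_| ≤ |g (t + 2 * h) - g t - 2 * h * g' t - (2 * h) ^ 2 / 2 * g'' t|
          + |g (t + h) - g t - h * g' t - h ^ 2 / 2 * g'' t|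
          + |g (t + h + h) - g (t + h) - h * g' (t + h) - h ^ 2 / 2 * g'' (t + h)|
          + |h ^ 2 / 2 * (g'' t - g'' (t + h))| := by
            apply (abs_add_le _ _).trans
            gcongr
            apply (abs_sub _ _).trans
            gcongr
            exact abs_sub _ _
      _ < ε * h ^ 2 := by nlinarith
  have : |h ^ 2 * X| = h ^ 2 * |X| := by rw [abs_mul, abs_of_nonneg hh2pos.le]
  rw [this] at hbound
  rw [mul_comm ε] at hbound
  exact lt_of_mul_lt_mul_left hbound hh2pos.le
end
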